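/- arXiv:2012.11081 — 2 statements merged into one kernel-verified Lean document; each statement's English description precedes it below -/
import Mathlib

section
/- Let n be an odd positive integer with n ≡ 0 (mod 3) and n ≢ 0 (mod 9), all of whose prime divisors p other than 3 satisfy p ≡ 1 (mod 6), and let ω(n) be the number of distinct prime divisors of n. Then 𝒯(n), the number of unimodular equivalence classes of clean lattice triangles of area n/2, equals (imph(n) + 2^{ω(n)} + 3)/6. -/
/-- `imph n` is the number of `x` with `1 ≤ x ≤ n` such that both `x - 1` and `x`
are coprime to `n`. -/
def imph (n : ℕ) : ℕ :=
  ((Finset.Icc 1 n).filter (fun x => Nat.gcd (x - 1) n = 1 ∧ Nat.gcd x n = 1)).card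

/-- Two sets of lattice points are unimodularly equivalent if there is an affine map
`L(x) = M x + u` with `M` an integer 2×2 matrix of determinant `±1` and `u ∈ ℤ²`
mapping the first set onto the second. -/
def UnimodEquiv (S₁ S₂ : Set (ℤ × ℤ)) : Prop :=
  ∃ a b c d u v : ℤ, (a * d - b * c = 1 ∨ a * d - b * c = -1) ∧
    (fun p : ℤ × ℤ => (a * p.1 + b * p.2 + u, c * p.1 + d * p.2 + v)) '' S₁ = S₂

/-- Twice the (signed) area of the lattice triangle with vertices `a, b, c`. -/
def triDet (a b c : ℤ × ℤ) : ℤ :=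
  (b.1 - a.1) * (c.2 - a.2) - (b.2 - a.2) * (c.1 - a.1)

/-- The triangle with vertices `a, b, c` is clean: every edge vector has coprime
coordinates (and the vertices are affinely independent). -/
def IsCleanTri (a b c : ℤ × ℤ) : Prop :=
  triDet a b c ≠ 0 ∧
  Int.gcd (b.1 - a.1) (b.2 - a.2) = 1 ∧
  Int.gcd (c.1 - a.1) (c.2 - a.2) = 1 ∧
  Int.gcd (c.1 - b.1) (c.2 - b.2) = 1

/-- The clean lattice triangles of area `n/2` (twice the area has absolute value `n`),
recorded by their ordered triple of vertices. -/
def CleanTri (n : ℕ) : Type :=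
  {T : (ℤ × ℤ) × (ℤ × ℤ) × (ℤ × ℤ) //
    IsCleanTri T.1 T.2.1 T.2.2 ∧ (triDet T.1 T.2.1 T.2.2).natAbs = n}

/-- `TriCount n` (written `𝒯(n)` in the paper) is the number of clean lattice triangles
of area `n/2` up to unimodular equivalence. -/
noncomputable def TriCount (n : ℕ) : ℕ :=
  Nat.card (Quot (fun T₁ T₂ : CleanTri n =>
    UnimodEquiv {T₁.1.1, T₁.1.2.1, T₁.1.2.2} {T₂.1.1, T₂.1.2.1, T₂.1.2.2}))


open Finset

namespace TCT


variable {n : ℕ}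

/-- decidable IsUnit in ZMod -/
instance (n : ℕ) : DecidablePred (IsUnit : ZMod n → Prop) := fun x =>
  decidable_of_iff (x * x⁻¹ = 1) ⟨fun h => IsUnit.of_mul_eq_one _ h, fun h => ZMod.mul_inv_of_unit x h⟩

lemma inv_eq' {x y : ZMod n} (hx : IsUnit x) (h : x * y = 1) : x⁻¹ = y := by
  have h1 := ZMod.mul_inv_of_unit x hx
  calc x⁻¹ = x⁻¹ * (x * y) := by rw [h, mul_one]
    _ = (x * x⁻¹) * y := by ring
    _ = y := by rw [h1, one_mul]

lemma unit_of_mul_eq_one {x y : ZMod n} (h : x * y = 1) : IsUnit x :=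
  IsUnit.of_mul_eq_one _ h

lemma inv_unit {x : ZMod n} (hx : IsUnit x) : IsUnit x⁻¹ :=
  IsUnit.of_mul_eq_one x (by rw [mul_comm]; exact ZMod.mul_inv_of_unit x hx)

lemma inv_inv' {x : ZMod n} (hx : IsUnit x) : x⁻¹⁻¹ = x :=
  inv_eq' (inv_unit hx) (by rw [mul_comm]; exact ZMod.mul_inv_of_unit x hx)

lemma mul_inv_cancel' {x : ZMod n} (hx : IsUnit x) : x * x⁻¹ = 1 := ZMod.mul_inv_of_unit x hx

lemma neg_inv' {x : ZMod n} (hx : IsUnit x) : (-x)⁻¹ = -(x⁻¹) :=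
  inv_eq' hx.neg (by have := ZMod.mul_inv_of_unit x hx; linear_combination this)

/-- the orbit of `x` under the six Möbius transformations -/
def E (x : ZMod n) : Finset (ZMod n) :=
  {x, x⁻¹, 1 - x, (1 - x)⁻¹, 1 - x⁻¹, x * (x - 1)⁻¹}

section units
variable {x : ZMod n} (hx : IsUnit x) (h1 : IsUnit (x - 1))

include hx h1

lemma k_eq : (1 - x)⁻¹ = -((x - 1)⁻¹) := by
  refine inv_eq' (by have := h1.neg; rwa [neg_sub] at this) ?_
  have jx := ZMod.mul_inv_of_unit _ h1
  linear_combination jx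

lemma i1_unit : IsUnit (x⁻¹ - 1) := by
  refine IsUnit.of_mul_eq_one (-(x * (x - 1)⁻¹)) ?_
  have ix := ZMod.mul_inv_of_unit x hx
  have jx := ZMod.mul_inv_of_unit _ h1
  linear_combination (-((x - 1)⁻¹)) * ix + jx

lemma i1_inv : (x⁻¹ - 1)⁻¹ = -(x * (x - 1)⁻¹) := by
  refine inv_eq' (i1_unit hx h1) ?_
  have ix := ZMod.mul_inv_of_unit x hx
  have jx := ZMod.mul_inv_of_unit _ h1
  linear_combination (-((x - 1)⁻¹)) * ix + jx

lemma oi1_unit : IsUnit (1 - x⁻¹) := by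
  have := (i1_unit hx h1).neg; rwa [neg_sub] at this

lemma oi1_inv : (1 - x⁻¹)⁻¹ = x * (x - 1)⁻¹ := by
  refine inv_eq' (oi1_unit hx h1) ?_
  have ix := ZMod.mul_inv_of_unit x hx
  have jx := ZMod.mul_inv_of_unit _ h1
  linear_combination (-((x - 1)⁻¹)) * ix + jx

lemma ox_unit : IsUnit (1 - x) := by
  have := h1.neg; rwa [neg_sub] at this

lemma closure : ∀ y ∈ E x, IsUnit y ∧ IsUnit (y - 1) := by
  have ix := ZMod.mul_inv_of_unit x hx
  have jx := ZMod.mul_inv_of_unit _ h1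
  intro y hy
  simp only [E, Finset.mem_insert, Finset.mem_singleton] at hy
  rcases hy with rfl | rfl | rfl | rfl | rfl | rfl
  · exact ⟨hx, h1⟩
  · exact ⟨inv_unit hx, i1_unit hx h1⟩
  · refine ⟨ox_unit hx h1, ?_⟩
    have := hx.neg
    have e : 1 - x - 1 = -x := by ring
    rwa [e]
  · refine ⟨inv_unit (ox_unit hx h1), ?_⟩
    refine IsUnit.of_mul_eq_one ((1 - x) * x⁻¹) ?_
    have kx := ZMod.mul_inv_of_unit _ (ox_unit hx h1)
    linear_combination x⁻¹ * kx + ix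
  · refine ⟨oi1_unit hx h1, ?_⟩
    have := (inv_unit hx).neg
    have e : 1 - x⁻¹ - 1 = -x⁻¹ := by ring
    rwa [e]
  · refine ⟨hx.mul (inv_unit h1), ?_⟩
    have e : x * (x - 1)⁻¹ - 1 = (x - 1)⁻¹ := by linear_combination jx
    rw [e]; exact inv_unit h1

lemma Es : E (x⁻¹ : ZMod n) = E x := by
  have ix := ZMod.mul_inv_of_unit x hx
  have jx := ZMod.mul_inv_of_unit _ h1
  have a2 : (x⁻¹)⁻¹ = x := inv_inv' hx
  have a4 : (1 - x⁻¹)⁻¹ = x * (x - 1)⁻¹ := oi1_inv hx h1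
  have a6 : x⁻¹ * (x⁻¹ - 1)⁻¹ = (1 - x)⁻¹ := by
    rw [i1_inv hx h1, k_eq hx h1]
    linear_combination (-((x - 1)⁻¹)) * ix
  unfold E
  rw [a2, a4, a6]
  ext z
  simp only [Finset.mem_insert, Finset.mem_singleton]
  tauto

lemma Et : E ((1 : ZMod n) - x) = E x := by
  have ix := ZMod.mul_inv_of_unit x hx
  have jx := ZMod.mul_inv_of_unit _ h1
  have b3 : (1 : ZMod n) - (1 - x) = x := by ring
  have b5 : 1 - ((1 : ZMod n) - x)⁻¹ = x * (x - 1)⁻¹ := by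
    rw [k_eq hx h1]; linear_combination -jx
  have b6 : ((1 : ZMod n) - x) * ((1 - x) - 1)⁻¹ = 1 - x⁻¹ := by
    have e : ((1 : ZMod n) - x) - 1 = -x := by ring
    rw [e, neg_inv' hx]
    linear_combination ix
  unfold E
  rw [b3, b5, b6]
  ext z
  simp only [Finset.mem_insert, Finset.mem_singleton]
  tauto

lemma orbit_eq : ∀ y ∈ E x, E y = E x := by
  intro y hy
  have hix := inv_unit hx
  have hox := ox_unit hx h1
  have h1x : IsUnit ((1 - x) - 1) := by
    have := hx.neg; have e : (1 : ZMod n) - x - 1 = -x := by ring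
    rwa [e]
  simp only [E, Finset.mem_insert, Finset.mem_singleton] at hy
  rcases hy with rfl | rfl | rfl | rfl | rfl | rfl
  · rfl
  · exact Es hx h1
  · exact Et hx h1
  · rw [Es hox h1x, Et hx h1]
  · have hi1 := i1_unit hx h1
    rw [Et hix hi1, Es hx h1]
  · have e : x * (x - 1)⁻¹ = (1 - x⁻¹)⁻¹ := (oi1_inv hx h1).symm
    have u1 : IsUnit (1 - x⁻¹) := oi1_unit hx h1
    have u2 : IsUnit ((1 : ZMod n) - x⁻¹ - 1) := by
      have := (inv_unit hx).neg
      have e2 : (1 : ZMod n) - x⁻¹ - 1 = -x⁻¹ := by ring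
      rwa [e2]
    rw [e, Es u1 u2]
    have hi1 := i1_unit hx h1
    rw [Et hix hi1, Es hx h1]

omit hx h1 in
lemma self_mem_E : x ∈ E x := by
  simp [E]

end units

lemma unit_cancel {u a b : ZMod n} (hu : IsUnit u) (h : u * a = u * b) : a = b := by
  have h1 := ZMod.mul_inv_of_unit u hu
  calc a = (u * u⁻¹) * a := by rw [h1, one_mul]
    _ = u⁻¹ * (u * a) := by ring
    _ = u⁻¹ * (u * b) := by rw [h]
    _ = (u * u⁻¹) * b := by ring
    _ = b := by rw [h1, one_mul]

/-- the set of points whose orbits we count -/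
def Xf (n : ℕ) [NeZero n] : Finset (ZMod n) :=
  univ.filter fun x => IsUnit x ∧ IsUnit (x - 1)

/-- roots of x^2 - x + 1 -/
def Roots (n : ℕ) [NeZero n] : Finset (ZMod n) :=
  univ.filter fun x => x ^ 2 - x + 1 = 0

section counting
variable [NeZero n]

lemma mem_Xf {x : ZMod n} : x ∈ Xf n ↔ IsUnit x ∧ IsUnit (x - 1) := by
  simp [Xf]

lemma mem_Roots {x : ZMod n} : x ∈ Roots n ↔ x ^ 2 - x + 1 = 0 := by
  simp [Roots]

lemma root_unit {x : ZMod n} (h : x ^ 2 - x + 1 = 0) : IsUnit x ∧ IsUnit (x - 1) :=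
  ⟨IsUnit.of_mul_eq_one (1 - x) (by linear_combination -h),
   IsUnit.of_mul_eq_one (-x) (by linear_combination -h)⟩

lemma card_E_le (x : ZMod n) : (E x).card ≤ 6 := by
  unfold E
  refine (card_insert_le _ _).trans (Nat.succ_le_succ ?_)
  refine (card_insert_le _ _).trans (Nat.succ_le_succ ?_)
  refine (card_insert_le _ _).trans (Nat.succ_le_succ ?_)
  refine (card_insert_le _ _).trans (Nat.succ_le_succ ?_)
  refine (card_insert_le _ _).trans (Nat.succ_le_succ ?_)
  simp

variable (h2 : IsUnit (2 : ZMod n)) (h3 : (3 : ZMod n) ≠ 0)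

include h2 h3

lemma neg_one_X : (-1 : ZMod n) ∈ Xf n := by
  rw [mem_Xf]
  refine ⟨isUnit_one.neg, ?_⟩
  have : (-1 : ZMod n) - 1 = -2 := by ring
  rw [this]; exact h2.neg

lemma E_neg_one : E (-1 : ZMod n) = {-1, 2, 2⁻¹} := by
  have c1 : ((-1 : ZMod n))⁻¹ = -1 := inv_eq' isUnit_one.neg (by ring)
  unfold E
  rw [c1]
  have c2 : (1 : ZMod n) - -1 = 2 := by ring
  rw [c2]
  have c3 : (-1 : ZMod n) - 1 = -2 := by ring
  rw [c3, neg_inv' h2]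
  have c4 : (-1 : ZMod n) * -2⁻¹ = 2⁻¹ := by ring
  rw [c4]
  ext z
  simp only [Finset.mem_insert, Finset.mem_singleton]
  tauto

lemma spec_distinct :
    (-1 : ZMod n) ≠ 2 ∧ (-1 : ZMod n) ≠ 2⁻¹ ∧ (2 : ZMod n) ≠ 2⁻¹ := by
  have i2 := ZMod.mul_inv_of_unit _ h2
  refine ⟨?_, ?_, ?_⟩
  · intro h; exact h3 (by linear_combination -h)
  · intro h; exact h3 (by linear_combination (-2 : ZMod n) * h - i2)
  · intro h; exact h3 (by linear_combination (2 : ZMod n) * h + i2)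

lemma card_E_neg_one : (E (-1 : ZMod n)).card = 3 := by
  obtain ⟨d1, d2, d3⟩ := spec_distinct h2 h3
  rw [E_neg_one h2 h3]
  rw [card_insert_of_notMem (by simp only [mem_insert, mem_singleton]; push_neg; exact ⟨d1, d2⟩),
    card_insert_of_notMem (by simp only [mem_singleton]; exact d3), card_singleton]

lemma E_root {x : ZMod n} (hr : x ^ 2 - x + 1 = 0) : E x = {x, 1 - x} := by
  obtain ⟨hx, h1⟩ := root_unit hr
  have rx1 : x⁻¹ = 1 - x := inv_eq' hx (by linear_combination -hr)
  have rx2 : (1 - x)⁻¹ = x := inv_eq' (ox_unit hx h1) (by linear_combination -hr)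
  have rx4 : x * (x - 1)⁻¹ = 1 - x := by
    have e : (x - 1)⁻¹ = -x := by
      have := k_eq hx h1
      rw [rx2] at this
      linear_combination this
    rw [e]; linear_combination -hr
  unfold E
  rw [rx1, rx2, rx4]
  have : (1 : ZMod n) - (1 - x) = x := by ring
  rw [this]
  ext z
  simp only [Finset.mem_insert, Finset.mem_singleton]
  tauto

lemma root_ne_flip {x : ZMod n} (hr : x ^ 2 - x + 1 = 0) : x ≠ 1 - x := by
  intro h
  exact h3 (by linear_combination 4 * hr - (2 * x - 1) * h)

lemma card_E_root {x : ZMod n} (hr : x ^ 2 - x + 1 = 0) : (E x).card = 2 := by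
  rw [E_root h2 h3 hr,
    card_insert_of_notMem (by simp only [mem_singleton]; exact root_ne_flip h2 h3 hr),
    card_singleton]

lemma flip_root {x : ZMod n} (hr : x ^ 2 - x + 1 = 0) : (1 - x) ^ 2 - (1 - x) + 1 = 0 := by
  linear_combination hr

lemma spec_not_root :
    ∀ x : ZMod n, x ^ 2 - x + 1 = 0 → x ≠ -1 ∧ x ≠ 2 ∧ x ≠ 2⁻¹ := by
  have i2 := ZMod.mul_inv_of_unit _ h2
  intro x hr
  refine ⟨?_, ?_, ?_⟩
  · rintro rfl; exact h3 (by linear_combination hr)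
  · rintro rfl; exact h3 (by linear_combination hr)
  · rintro rfl; exact h3 (by linear_combination 4 * hr + (-(2 * (2:ZMod n)⁻¹ - 1)) * i2)

/-- pairwise distinctness of the six orbit elements for generic x -/
lemma card_E_generic {x : ZMod n} (hx : IsUnit x) (h1 : IsUnit (x - 1))
    (hx1 : x ≠ -1) (hx2 : x ≠ 2) (hx3 : x ≠ 2⁻¹) (hroot : x ^ 2 - x + 1 ≠ 0) :
    (E x).card = 6 := by
  have ix := ZMod.mul_inv_of_unit x hx
  have jx := ZMod.mul_inv_of_unit _ h1
  have kx := ZMod.mul_inv_of_unit _ (ox_unit hx h1)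
  have i2 := ZMod.mul_inv_of_unit _ h2
  have d12 : x ≠ x⁻¹ := by
    intro h
    have e : (x - 1) * (x + 1) = (x - 1) * 0 := by
      rw [mul_zero]; linear_combination x * h + ix
    exact hx1 (by linear_combination unit_cancel h1 e)
  have d13 : x ≠ 1 - x := by
    intro h
    have e : (2 : ZMod n) * x = 2 * 2⁻¹ := by linear_combination h - i2
    exact hx3 (unit_cancel h2 e)
  have d14 : x ≠ (1 - x)⁻¹ := by
    intro h
    exact hroot (by linear_combination (-(1 - x)) * h - kx)
  have d15 : x ≠ 1 - x⁻¹ := by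
    intro h
    exact hroot (by linear_combination x * h - ix)
  have d16 : x ≠ x * (x - 1)⁻¹ := by
    intro h
    have e : x * (x - 2) = x * 0 := by
      rw [mul_zero]; linear_combination (x - 1) * h + x * jx
    exact hx2 (by linear_combination unit_cancel hx e)
  have d23 : x⁻¹ ≠ 1 - x := by
    intro h
    exact hroot (by linear_combination x * h - ix)
  have d24 : x⁻¹ ≠ (1 - x)⁻¹ := by
    intro h
    have e1 : (1 : ZMod n) - x = x := by
      linear_combination (x * (1 - x)) * h - (1 - x) * ix + x * kx
    have e2 : (2 : ZMod n) * x = 2 * 2⁻¹ := by linear_combination -e1 - i2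
    exact hx3 (unit_cancel h2 e2)
  have d25 : x⁻¹ ≠ 1 - x⁻¹ := by
    intro h
    exact hx2 (by linear_combination -x * h + 2 * ix)
  have d26 : x⁻¹ ≠ x * (x - 1)⁻¹ := by
    intro h
    exact hroot (by linear_combination (-(x * (x - 1))) * h + (x - 1) * ix + (-(x ^ 2)) * jx)
  have d34 : (1 : ZMod n) - x ≠ (1 - x)⁻¹ := by
    intro h
    have e : x * (x - 2) = x * 0 := by
      rw [mul_zero]; linear_combination (1 - x) * h + kx
    exact hx2 (by linear_combination unit_cancel hx e)
  have d35 : (1 : ZMod n) - x ≠ 1 - x⁻¹ := by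
    intro h
    have e : (x - 1) * (x + 1) = (x - 1) * 0 := by
      rw [mul_zero]; linear_combination -x * h + ix
    exact hx1 (by linear_combination unit_cancel h1 e)
  have d36 : (1 : ZMod n) - x ≠ x * (x - 1)⁻¹ := by
    intro h
    exact hroot (by linear_combination (-(x - 1)) * h + (-x) * jx)
  have d45 : ((1 : ZMod n) - x)⁻¹ ≠ 1 - x⁻¹ := by
    intro h
    exact hroot (by linear_combination (x * (1 - x)) * h + (-x) * kx + (-(1 - x)) * ix)
  have d46 : ((1 : ZMod n) - x)⁻¹ ≠ x * (x - 1)⁻¹ := by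
    intro h
    have e : (x - 1) * (x + 1) = (x - 1) * 0 := by
      rw [mul_zero]
      linear_combination ((x - 1) * (1 - x)) * h + (-(x - 1)) * kx + (x * (1 - x)) * jx
    exact hx1 (by linear_combination unit_cancel h1 e)
  have d56 : (1 : ZMod n) - x⁻¹ ≠ x * (x - 1)⁻¹ := by
    intro h
    have e2 : (2 : ZMod n) * x = 2 * 2⁻¹ := by
      linear_combination (-(x * (x - 1))) * h + (-(x - 1)) * ix + (-(x ^ 2)) * jx - i2
    exact hx3 (unit_cancel h2 e2)
  unfold E
  rw [card_insert_of_notMem (by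
      simp only [mem_insert, mem_singleton]; push_neg
      exact ⟨d12, d13, d14, d15, d16⟩),
    card_insert_of_notMem (by
      simp only [mem_insert, mem_singleton]; push_neg
      exact ⟨d23, d24, d25, d26⟩),
    card_insert_of_notMem (by
      simp only [mem_insert, mem_singleton]; push_neg
      exact ⟨d34, d35, d36⟩),
    card_insert_of_notMem (by
      simp only [mem_insert, mem_singleton]; push_neg
      exact ⟨d45, d46⟩),
    card_insert_of_notMem (by simp only [mem_singleton]; exact d56),
    card_singleton]

/-- main counting lemma -/
theorem count_main :
    6 * ((Xf n).image E).card = (Xf n).card + 2 * (Roots n).card + 3 := by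
  classical
  set O := (Xf n).image E with hO
  -- fibers of E over O are the orbits themselves
  have fiber_eq : ∀ F ∈ O, (Xf n).filter (fun z => E z = F) = F := by
    intro F hF
    obtain ⟨x, hxX, rfl⟩ := Finset.mem_image.mp hF
    obtain ⟨hx, h1⟩ := mem_Xf.mp hxX
    ext z
    simp only [mem_filter]
    constructor
    · rintro ⟨hz, hez⟩
      rw [← hez]; exact self_mem_E
    · intro hz
      obtain ⟨hzu, hzu1⟩ := closure hx h1 z hz
      exact ⟨mem_Xf.mpr ⟨hzu, hzu1⟩, orbit_eq hx h1 z hz⟩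
  have hXcard : (Xf n).card = ∑ F ∈ O, F.card := by
    rw [Finset.card_eq_sum_card_fiberwise (fun x hx => Finset.mem_image_of_mem E hx)]
    exact Finset.sum_congr rfl fun F hF => by rw [fiber_eq F hF]
  -- the deficient orbits
  set D : Finset (Finset (ZMod n)) := insert (E (-1)) ((Roots n).image E) with hD
  have hRX : ∀ x ∈ Roots n, x ∈ Xf n := by
    intro x hx
    exact mem_Xf.mpr (root_unit (mem_Roots.mp hx))
  have hDO : D ⊆ O := by
    intro F hF
    rw [hD, Finset.mem_insert] at hF
    rcases hF with rfl | hF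
    · exact Finset.mem_image_of_mem E (neg_one_X h2 h3)
    · obtain ⟨x, hx, rfl⟩ := Finset.mem_image.mp hF
      exact Finset.mem_image_of_mem E (hRX x hx)
  have hgeneric : ∀ F ∈ O, F ∉ D → F.card = 6 := by
    intro F hF hFD
    obtain ⟨x, hxX, rfl⟩ := Finset.mem_image.mp hF
    obtain ⟨hx, h1⟩ := mem_Xf.mp hxX
    have hnotroot : x ^ 2 - x + 1 ≠ 0 := by
      intro hr
      exact hFD (by
        rw [hD, Finset.mem_insert]
        exact Or.inr (Finset.mem_image_of_mem E (mem_Roots.mpr hr)))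
    have hne : E x ≠ E (-1) := by
      intro he
      exact hFD (by rw [hD, Finset.mem_insert]; exact Or.inl he)
    -- x not in {-1, 2, 2⁻¹}
    have hmem : x ∉ ({-1, 2, 2⁻¹} : Finset (ZMod n)) := by
      intro hm
      apply hne
      rw [← E_neg_one h2 h3] at hm
      have hm1 : IsUnit (-1 : ZMod n) := isUnit_one.neg
      have hm2 : IsUnit ((-1 : ZMod n) - 1) := by
        have : (-1 : ZMod n) - 1 = -2 := by ring
        rw [this]; exact h2.neg
      exact orbit_eq hm1 hm2 x hm
    simp only [mem_insert, mem_singleton] at hmem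
    push_neg at hmem
    exact card_E_generic h2 h3 hx h1 hmem.1 hmem.2.1 hmem.2.2 hnotroot
  -- sum over O
  have hsum6 : 6 * O.card = ∑ F ∈ O, (F.card + (6 - F.card)) := by
    rw [Finset.sum_congr rfl (fun F hF => ?_), Finset.sum_const, smul_eq_mul, mul_comm]
    obtain ⟨x, _, rfl⟩ := Finset.mem_image.mp hF
    have := card_E_le (n := n) x
    omega
  have hsplit : ∑ F ∈ O, (F.card + (6 - F.card))
      = ∑ F ∈ O, F.card + ∑ F ∈ O, (6 - F.card) := Finset.sum_add_distrib
  have hnotmem : E (-1 : ZMod n) ∉ (Roots n).image E := by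
    intro hm
    obtain ⟨x, hx, he⟩ := Finset.mem_image.mp hm
    have hr := mem_Roots.mp hx
    have hmm : (-1 : ZMod n) ∈ E x := by rw [he]; exact self_mem_E
    rw [E_root h2 h3 hr] at hmm
    simp only [mem_insert, mem_singleton] at hmm
    rcases hmm with h | h
    · exact (spec_not_root h2 h3 x hr).1 h.symm
    · exact (spec_not_root h2 h3 x hr).2.1 (by linear_combination h)
  have hOD : ∑ F ∈ O, (6 - F.card) = ∑ F ∈ D, (6 - F.card) := by
    refine (Finset.sum_subset hDO ?_).symm
    intro F hF hFD
    rw [hgeneric F hF hFD]; omega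
  have hDsum : ∑ F ∈ D, (6 - F.card) = 3 + 4 * ((Roots n).image E).card := by
    rw [hD, Finset.sum_insert hnotmem, card_E_neg_one h2 h3]
    congr 1
    rw [Finset.sum_congr rfl (fun F hF => ?_), Finset.sum_const, smul_eq_mul, mul_comm]
    obtain ⟨x, hx, rfl⟩ := Finset.mem_image.mp hF
    rw [card_E_root h2 h3 (mem_Roots.mp hx)]
  have fiberR : ∀ F ∈ (Roots n).image E, (Roots n).filter (fun z => E z = F) = F := by
    intro F hF
    obtain ⟨x, hx, rfl⟩ := Finset.mem_image.mp hF
    have hr := mem_Roots.mp hx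
    obtain ⟨hxu, h1u⟩ := root_unit hr
    ext z
    simp only [mem_filter]
    constructor
    · rintro ⟨hz, hez⟩
      rw [← hez]; exact self_mem_E
    · intro hz
      refine ⟨?_, orbit_eq hxu h1u z hz⟩
      rw [E_root h2 h3 hr] at hz
      simp only [mem_insert, mem_singleton] at hz
      rcases hz with rfl | rfl
      · exact hx
      · exact mem_Roots.mpr (flip_root h2 h3 hr)
  have hRcard : (Roots n).card = 2 * ((Roots n).image E).card := by
    rw [Finset.card_eq_sum_card_fiberwise (fun x hx => Finset.mem_image_of_mem E hx)]
    rw [Finset.sum_congr rfl (fun F hF => ?_), Finset.sum_const, smul_eq_mul, mul_comm]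
    rw [fiberR F hF]
    obtain ⟨x, hx, rfl⟩ := Finset.mem_image.mp hF
    rw [card_E_root h2 h3 (mem_Roots.mp hx)]
  omega

end counting
/-- number of roots of x^2 - x + 1 in ZMod m -/
noncomputable def RC (m : ℕ) : ℕ := Nat.card {x : ZMod m // x ^ 2 - x + 1 = 0}

lemma RC_one : RC 1 = 1 := by
  unfold RC
  rw [Nat.card_congr (Equiv.subtypeUnivEquiv (fun x : ZMod 1 => Subsingleton.elim _ _))]
  simp [Nat.card_eq_fintype_card]

lemma RC_three : RC 3 = 1 := by
  unfold RC
  rw [Nat.card_eq_fintype_card, Fintype.card_subtype]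
  decide

lemma RC_mul {a b : ℕ} (h : a.Coprime b) : RC (a * b) = RC a * RC b := by
  unfold RC
  have e := ZMod.chineseRemainder h
  have key : ∀ x : ZMod (a * b),
      x ^ 2 - x + 1 = 0 ↔ ((fun y : ZMod a × ZMod b =>
        y.1 ^ 2 - y.1 + 1 = 0 ∧ y.2 ^ 2 - y.2 + 1 = 0) (e.toEquiv x)) := by
    intro x
    have hmap : e (x ^ 2 - x + 1) = (e x ^ 2 - e x + 1) := by
      rw [map_add, map_sub, map_pow, map_one]
    constructor
    · intro hx
      have h0 : e (x ^ 2 - x + 1) = 0 := by rw [hx, map_zero]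
      rw [hmap] at h0
      exact ⟨congrArg Prod.fst h0, congrArg Prod.snd h0⟩
    · intro ⟨h1, h2⟩
      apply e.injective
      rw [hmap, map_zero]
      exact Prod.ext h1 h2
  rw [Nat.card_congr ((e.toEquiv.subtypeEquiv key).trans
    (Equiv.subtypeProdEquivProd
      (p := fun z : ZMod a => z ^ 2 - z + 1 = 0)
      (q := fun z : ZMod b => z ^ 2 - z + 1 = 0))), Nat.card_prod]

section primepow
variable {p : ℕ} (hp : p.Prime) (hp6 : p % 6 = 1)

include hp hp6

lemma p_ge7 : 7 ≤ p := by
  have h2 := hp.two_le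
  rcases Nat.lt_or_ge p 7 with h | h
  · interval_cases p <;> omega
  · exact h

lemma p_not_dvd_three : ¬ (p : ℤ) ∣ 3 := by
  intro h
  have := Int.le_of_dvd (by norm_num) h
  have h7 := p_ge7 hp hp6
  omega

/-- existence of a root mod p, via an element of order 6 -/
lemma exists_root_mod_p : ∃ x : ℤ, (p : ℤ) ∣ x ^ 2 - x + 1 := by
  haveI : Fact p.Prime := ⟨hp⟩
  obtain ⟨g, hg⟩ := IsCyclic.exists_generator (α := (ZMod p)ˣ)
  have hord : orderOf g = p - 1 := by
    rw [orderOf_eq_card_of_forall_mem_zpowers hg, Nat.card_eq_fintype_card, ZMod.card_units]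
  have h6 : 6 ∣ p - 1 := by
    have := hp.two_le
    omega
  set ζ := g ^ ((p - 1) / 6) with hζ
  have hordζ : orderOf ζ = 6 := by
    rw [hζ, orderOf_pow, hord, Nat.gcd_eq_right (Nat.div_dvd_of_dvd h6),
      Nat.div_div_self h6 (by have := hp.two_le; omega)]
  have h61 : ζ ^ 6 = 1 := by rw [← hordζ]; exact pow_orderOf_eq_one ζ
  have h31 : ζ ^ 3 ≠ 1 := by
    intro h
    have := orderOf_dvd_iff_pow_eq_one.mpr h
    rw [hordζ] at this
    omega
  have hz3 : (ζ : ZMod p) ^ 3 = -1 := by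
    have hsq : ((ζ : ZMod p) ^ 3 - 1) * ((ζ : ZMod p) ^ 3 + 1) = 0 := by
      have h6v : (ζ : ZMod p) ^ 6 = 1 := by
        have := congrArg (Units.val) h61
        push_cast at this
        exact this
      linear_combination h6v
    rcases mul_eq_zero.mp hsq with h | h
    · exfalso
      apply h31
      apply Units.ext
      push_cast
      linear_combination h
    · linear_combination h
  have hzne : (ζ : ZMod p) ≠ -1 := by
    intro h
    have h2 : orderOf ζ ∣ 2 := by
      apply orderOf_dvd_iff_pow_eq_one.mpr
      apply Units.ext
      push_cast
      rw [h]; ring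
    rw [hordζ] at h2
    omega
  have hroot : (ζ : ZMod p) ^ 2 - (ζ : ZMod p) + 1 = 0 := by
    have hfac : ((ζ : ZMod p) + 1) * ((ζ : ZMod p) ^ 2 - (ζ : ZMod p) + 1) = 0 := by
      linear_combination hz3
    rcases mul_eq_zero.mp hfac with h | h
    · exact absurd (by linear_combination h) hzne
    · exact h
  refine ⟨((ζ : ZMod p).val : ℤ), ?_⟩
  have hc : (((((ζ : ZMod p).val : ℤ) ^ 2 - ((ζ : ZMod p).val : ℤ) + 1) : ℤ) : ZMod p) = 0 := by
    push_cast
    rw [ZMod.natCast_val, ZMod.cast_id]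
    exact hroot
  exact_mod_cast (ZMod.intCast_zmod_eq_zero_iff_dvd _ p).mp hc

lemma exists_root_mod_pow : ∀ k : ℕ, ∃ x : ℤ, (p : ℤ) ^ (k + 1) ∣ x ^ 2 - x + 1 := by
  intro k
  induction k with
  | zero =>
    obtain ⟨x, hx⟩ := exists_root_mod_p hp hp6
    exact ⟨x, by rwa [pow_one]⟩
  | succ j ih =>
    obtain ⟨x, m, hm⟩ := ih
    have hnd : ¬ (p : ℤ) ∣ (2 * x - 1) := by
      intro hd
      apply p_not_dvd_three hp hp6
      have h1 : (p : ℤ) ∣ (2 * x - 1) ^ 2 := dvd_pow hd (by norm_num)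
      have h2 : (p : ℤ) ∣ 4 * (x ^ 2 - x + 1) := ⟨4 * (p : ℤ) ^ j * m, by rw [hm]; ring⟩
      have h3 := dvd_sub h2 h1
      have e : 4 * (x ^ 2 - x + 1) - (2 * x - 1) ^ 2 = 3 := by ring
      rwa [e] at h3
    have hpp : Prime (p : ℤ) := Nat.prime_iff_prime_int.mp hp
    obtain ⟨u, v, huv⟩ := (hpp.coprime_iff_not_dvd.mpr hnd)
    refine ⟨x + (-(m * v)) * (p : ℤ) ^ (j + 1),
      m * u + (-(m * v)) ^ 2 * (p : ℤ) ^ j, ?_⟩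
    linear_combination hm + (-(m * (p : ℤ) ^ (j + 1))) * huv

lemma RC_pp (k : ℕ) : RC (p ^ (k + 1)) = 2 := by
  have hppos : 0 < p ^ (k + 1) := pow_pos hp.pos _
  haveI : NeZero (p ^ (k + 1)) := ⟨hppos.ne'⟩
  set q := p ^ (k + 1) with hq
  obtain ⟨x₀, hx₀⟩ := exists_root_mod_pow hp hp6 k
  set r : ZMod q := ((x₀ : ℤ) : ZMod q) with hr
  have hroot : r ^ 2 - r + 1 = 0 := by
    have : (((x₀ ^ 2 - x₀ + 1 : ℤ)) : ZMod q) = 0 :=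
      (ZMod.intCast_zmod_eq_zero_iff_dvd _ q).mpr (by exact_mod_cast hx₀)
    push_cast at this
    exact this
  -- 3 ≠ 0 in ZMod q
  have h3ne : (3 : ZMod q) ≠ 0 := by
    intro h
    have : q ∣ 3 := (ZMod.natCast_eq_zero_iff 3 q).mp (by exact_mod_cast h)
    have h1 := Nat.le_of_dvd (by norm_num) this
    have h7 := p_ge7 hp hp6
    have : p ≤ q := Nat.le_self_pow (Nat.succ_ne_zero k) p
    omega
  have hrne : r ≠ 1 - r := by
    intro h
    apply h3ne
    linear_combination 4 * hroot - (2 * r - 1) * h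
  -- classification of roots
  have hclass : ∀ x : ZMod q, x ^ 2 - x + 1 = 0 → x = r ∨ x = 1 - r := by
    intro x hx
    -- lift to ℤ
    set A := (x.val : ℤ) with hA
    set R := (r.val : ℤ) with hR
    have hxA : ((A : ℤ) : ZMod q) = x := by rw [hA]; exact_mod_cast ZMod.natCast_rightInverse x
    have hrR : ((R : ℤ) : ZMod q) = r := by rw [hR]; exact_mod_cast ZMod.natCast_rightInverse r
    have hdvd : (q : ℤ) ∣ (A - R) * (A + R - 1) := by
      rw [← ZMod.intCast_zmod_eq_zero_iff_dvd]
      push_cast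
      rw [hxA, hrR]
      linear_combination hx - hroot
    have hfA : (q : ℤ) ∣ A ^ 2 - A + 1 := by
      rw [← ZMod.intCast_zmod_eq_zero_iff_dvd]
      push_cast
      rw [hxA]
      exact hx
    have hpA : ¬ (p : ℤ) ∣ (2 * A - 1) := by
      intro hd
      apply p_not_dvd_three hp hp6
      have h1 : (p : ℤ) ∣ (2 * A - 1) ^ 2 := dvd_pow hd (by norm_num)
      have hpq : (p : ℤ) ∣ (q : ℤ) := by
        exact_mod_cast Int.natCast_dvd_natCast.mpr (dvd_pow_self p (Nat.succ_ne_zero k))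
      have h2 : (p : ℤ) ∣ 4 * (A ^ 2 - A + 1) := (hpq.trans hfA).mul_left 4
      have h3 := dvd_sub h2 h1
      have e : 4 * (A ^ 2 - A + 1) - (2 * A - 1) ^ 2 = 3 := by ring
      rwa [e] at h3
    have hpp : Prime (p : ℤ) := Nat.prime_iff_prime_int.mp hp
    have hqz : (q : ℤ) = (p : ℤ) ^ (k + 1) := by rw [hq]; push_cast; ring
    by_cases hc : (p : ℤ) ∣ (A + R - 1)
    · -- then p does not divide A - R
      have hnc : ¬ (p : ℤ) ∣ (A - R) := by
        intro hc2
        exact hpA (by have := dvd_add hc2 hc; rwa [show A - R + (A + R - 1) = 2 * A - 1 by ring] at this)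
      have hcop : IsCoprime ((q : ℤ)) (A - R) := by
        rw [hqz]
        exact (hpp.coprime_iff_not_dvd.mpr hnc).pow_left
      have : (q : ℤ) ∣ (A + R - 1) := hcop.dvd_of_dvd_mul_left hdvd
      right
      have h0 : (((A + R - 1 : ℤ)) : ZMod q) = 0 := (ZMod.intCast_zmod_eq_zero_iff_dvd _ q).mpr this
      push_cast at h0
      rw [hxA, hrR] at h0
      linear_combination h0
    · have hcop : IsCoprime ((q : ℤ)) (A + R - 1) := by
        rw [hqz]
        exact (hpp.coprime_iff_not_dvd.mpr hc).pow_left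
      have : (q : ℤ) ∣ (A - R) := hcop.dvd_of_dvd_mul_right hdvd
      left
      have h0 : (((A - R : ℤ)) : ZMod q) = 0 := (ZMod.intCast_zmod_eq_zero_iff_dvd _ q).mpr this
      push_cast at h0
      rw [hxA, hrR] at h0
      linear_combination h0
  have hflip : (1 - r) ^ 2 - (1 - r) + 1 = 0 := by linear_combination hroot
  unfold RC
  rw [Nat.card_eq_fintype_card, Fintype.card_subtype]
  have : (univ.filter fun x : ZMod q => x ^ 2 - x + 1 = 0) = {r, 1 - r} := by
    ext z
    simp only [mem_filter, mem_univ, true_and, mem_insert, mem_singleton]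
    constructor
    · exact hclass z
    · rintro (rfl | rfl)
      · exact hroot
      · exact hflip
  rw [this, card_insert_of_notMem (by simp only [mem_singleton]; exact hrne), card_singleton]

end primepow

/-- number of roots is multiplicative over the given factorization -/
lemma RC_eq_pow {m : ℕ} (hm : 0 < m) (hfac : ∀ p ∈ m.primeFactors, p % 6 = 1) :
    RC m = 2 ^ m.primeFactors.card := by
  induction m using Nat.recOnPosPrimePosCoprime with
  | prime_pow p k hp hk =>
    have hp6 : p % 6 = 1 := by
      apply hfac
      rw [Nat.primeFactors_prime_pow hk.ne' hp]
      exact Finset.mem_singleton_self p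
    obtain ⟨j, rfl⟩ : ∃ j, k = j + 1 := ⟨k - 1, by omega⟩
    rw [RC_pp hp hp6 j, Nat.primeFactors_prime_pow (Nat.succ_ne_zero j) hp,
      Finset.card_singleton, pow_one]
  | zero => omega
  | one => simpa [Nat.primeFactors_one] using RC_one
  | coprime a b ha hb hab iha ihb =>
    have hfa : ∀ p ∈ a.primeFactors, p % 6 = 1 := fun p hpf =>
      hfac p (by
        rw [Nat.Coprime.primeFactors_mul hab]
        exact Finset.mem_union_left _ hpf)
    have hfb : ∀ p ∈ b.primeFactors, p % 6 = 1 := fun p hpf =>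
      hfac p (by
        rw [Nat.Coprime.primeFactors_mul hab]
        exact Finset.mem_union_right _ hpf)
    rw [RC_mul hab, iha (by omega) hfa, ihb (by omega) hfb,
      Nat.Coprime.primeFactors_mul hab,
      Finset.card_union_of_disjoint hab.disjoint_primeFactors, pow_add]

/-- the final root count -/
theorem RC_main {n : ℕ} (hn : 0 < n) (h3 : 3 ∣ n) (h9 : ¬ (9 ∣ n))
    (hp : ∀ p ∈ n.primeFactors, p ≠ 3 → p % 6 = 1) :
    RC n = 2 ^ (n.primeFactors.card - 1) := by
  obtain ⟨m, rfl⟩ := h3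
  have hm : 0 < m := by omega
  have h3m : ¬ 3 ∣ m := fun hd => h9 (by omega)
  have hcop : Nat.Coprime 3 m := (Nat.prime_three.coprime_iff_not_dvd).mpr h3m
  have hfm : ∀ p ∈ m.primeFactors, p % 6 = 1 := by
    intro p hpf
    have hpn : p ∈ (3 * m).primeFactors := by
      rw [Nat.Coprime.primeFactors_mul hcop]
      exact Finset.mem_union_right _ hpf
    apply hp p hpn
    rintro rfl
    exact h3m (Nat.dvd_of_mem_primeFactors hpf)
  have h3notm : 3 ∉ m.primeFactors := fun h => h3m (Nat.dvd_of_mem_primeFactors h)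
  rw [RC_mul hcop, RC_three, one_mul, RC_eq_pow hm hfm,
    Nat.Coprime.primeFactors_mul hcop,
    Finset.card_union_of_disjoint hcop.disjoint_primeFactors]
  have : (3 : ℕ).primeFactors = {3} := Nat.Prime.primeFactors Nat.prime_three
  rw [this, Finset.card_singleton]
  congr 1
  omega

section imphsec
variable {n : ℕ} [NeZero n]
lemma imph_eq (hn : 1 < n) : imph n = (Xf n).card := by
  haveI : Fact (1 < n) := ⟨hn⟩
  unfold imph
  apply Finset.card_bij' (fun x _ => ((x : ℕ) : ZMod n)) (fun z _ => z.val)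
  · -- maps into Xf
    intro x hx
    simp only [mem_filter, Finset.mem_Icc] at hx
    obtain ⟨⟨hx1, hxn⟩, hg1, hg2⟩ := hx
    simp only [Xf, mem_filter, mem_univ, true_and]
    constructor
    · exact (ZMod.isUnit_iff_coprime x n).mpr hg2
    · have hc : ((x - 1 : ℕ) : ZMod n) = (x : ZMod n) - 1 := by
        push_cast [Nat.cast_sub hx1]
        ring
      rw [← hc]
      exact (ZMod.isUnit_iff_coprime (x - 1) n).mpr hg1
  · -- reverse maps into filter
    intro z hz
    simp only [Xf, mem_filter, mem_univ, true_and] at hz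
    obtain ⟨hu, hu1⟩ := hz
    have hzne : z ≠ 0 := by
      rintro rfl
      rw [isUnit_zero_iff] at hu
      exact zero_ne_one hu
    have hval1 : 1 ≤ z.val := by
      rcases Nat.eq_zero_or_pos z.val with h | h
      · exact absurd ((ZMod.val_eq_zero z).mp h) hzne
      · exact h
    have hvallt : z.val < n := ZMod.val_lt z
    simp only [mem_filter, Finset.mem_Icc]
    refine ⟨⟨hval1, by omega⟩, ?_, ?_⟩
    · -- gcd (z.val - 1) n = 1
      have he : z - 1 = ((z.val - 1 : ℕ) : ZMod n) := by
        push_cast [Nat.cast_sub hval1]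
        rw [ZMod.natCast_val, ZMod.cast_id]
      rw [he] at hu1
      exact (ZMod.isUnit_iff_coprime (z.val - 1) n).mp hu1
    · have : IsUnit ((z.val : ℕ) : ZMod n) := by
        rw [ZMod.natCast_val, ZMod.cast_id]; exact hu
      exact (ZMod.isUnit_iff_coprime z.val n).mp this
  · -- j ∘ i = id
    intro x hx
    simp only [mem_filter, Finset.mem_Icc] at hx
    obtain ⟨⟨hx1, hxn⟩, hg1, hg2⟩ := hx
    have hlt : x < n := by
      rcases Nat.lt_or_ge x n with h | h
      · exact h
      · exfalso
        have : x = n := by omega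
        subst this
        rw [Nat.gcd_self] at hg2
        omega
    exact ZMod.val_cast_of_lt hlt
  · -- i ∘ j = id
    intro z hz
    rw [ZMod.natCast_val, ZMod.cast_id]

end imphsec
lemma unimod_refl (S : Set (ℤ × ℤ)) : UnimodEquiv S S := by
  refine ⟨1, 0, 0, 1, 0, 0, Or.inl (by ring), ?_⟩
  have : (fun p : ℤ × ℤ => (1 * p.1 + 0 * p.2 + 0, 0 * p.1 + 1 * p.2 + 0)) = id := by
    funext p
    simp
  rw [this, Set.image_id]

lemma unimod_symm {S₁ S₂ : Set (ℤ × ℤ)} (h : UnimodEquiv S₁ S₂) : UnimodEquiv S₂ S₁ := by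
  obtain ⟨a, b, c, d, u, v, hdet, him⟩ := h
  set e : ℤ := a * d - b * c with he
  have hee : e * e = 1 := by rcases hdet with h | h <;> rw [h] <;> ring
  refine ⟨e * d, -(e * b), -(e * c), e * a, -((e * d) * u + (-(e * b)) * v),
    -((-(e * c)) * u + (e * a) * v), ?_, ?_⟩
  · rcases hdet with h | h
    · left; linear_combination (e ^ 2 + e + 1) * h
    · right; linear_combination (e ^ 2 - e + 1) * h
  · rw [← him, ← Set.image_comp]
    have hcomp : ((fun p : ℤ × ℤ => (e * d * p.1 + -(e * b) * p.2 + -(e * d * u + -(e * b) * v),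
        -(e * c) * p.1 + e * a * p.2 + -(-(e * c) * u + e * a * v))) ∘
        (fun p : ℤ × ℤ => (a * p.1 + b * p.2 + u, c * p.1 + d * p.2 + v))) = id := by
      funext p
      simp only [Function.comp_apply, id_eq]
      have h1 : e * d * (a * p.1 + b * p.2 + u) + -(e * b) * (c * p.1 + d * p.2 + v) +
          -(e * d * u + -(e * b) * v) = p.1 := by linear_combination p.1 * hee
      have h2 : -(e * c) * (a * p.1 + b * p.2 + u) + e * a * (c * p.1 + d * p.2 + v) +
          -(-(e * c) * u + e * a * v) = p.2 := by linear_combination p.2 * hee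
      rw [h1, h2]
    rw [hcomp, Set.image_id]

lemma unimod_trans {S₁ S₂ S₃ : Set (ℤ × ℤ)} (h : UnimodEquiv S₁ S₂) (h' : UnimodEquiv S₂ S₃) :
    UnimodEquiv S₁ S₃ := by
  obtain ⟨a, b, c, d, u, v, hdet, him⟩ := h
  obtain ⟨a', b', c', d', u', v', hdet', him'⟩ := h'
  refine ⟨a' * a + b' * c, a' * b + b' * d, c' * a + d' * c, c' * b + d' * d,
    a' * u + b' * v + u', c' * u + d' * v + v', ?_, ?_⟩
  · rcases hdet with h1 | h1 <;> rcases hdet' with h2 | h2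
    · left; linear_combination (a' * d' - b' * c') * h1 + h2
    · right; linear_combination (a' * d' - b' * c') * h1 + h2
    · right; linear_combination (a' * d' - b' * c') * h1 - h2
    · left; linear_combination (a' * d' - b' * c') * h1 - h2
  · rw [← him', ← him, ← Set.image_comp]
    apply Set.image_congr'
    intro p
    simp only [Function.comp_apply, Prod.mk.injEq]
    exact ⟨by ring, by ring⟩

lemma unimod_gcd {a b c d v1 v2 : ℤ} (hdet : a * d - b * c = 1 ∨ a * d - b * c = -1) :
    Int.gcd (a * v1 + b * v2) (c * v1 + d * v2) = Int.gcd v1 v2 := by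
  have hL1 : (↑(Int.gcd (a * v1 + b * v2) (c * v1 + d * v2)) : ℤ) ∣ (a * v1 + b * v2) :=
    Int.gcd_dvd_left _ _
  have hL2 : (↑(Int.gcd (a * v1 + b * v2) (c * v1 + d * v2)) : ℤ) ∣ (c * v1 + d * v2) :=
    Int.gcd_dvd_right _ _
  apply Nat.dvd_antisymm
  · have h1 : (↑(Int.gcd (a * v1 + b * v2) (c * v1 + d * v2)) : ℤ) ∣ v1 := by
      rcases hdet with h | h
      · have e : v1 = d * (a * v1 + b * v2) - b * (c * v1 + d * v2) := by
          linear_combination (-v1) * h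
        have hh := dvd_sub (hL1.mul_left d) (hL2.mul_left b)
        rwa [← e] at hh
      · have e : v1 = b * (c * v1 + d * v2) - d * (a * v1 + b * v2) := by
          linear_combination v1 * h
        have hh := dvd_sub (hL2.mul_left b) (hL1.mul_left d)
        rwa [← e] at hh
    have h2 : (↑(Int.gcd (a * v1 + b * v2) (c * v1 + d * v2)) : ℤ) ∣ v2 := by
      rcases hdet with h | h
      · have e : v2 = a * (c * v1 + d * v2) - c * (a * v1 + b * v2) := by
          linear_combination (-v2) * h
        have hh := dvd_sub (hL2.mul_left a) (hL1.mul_left c)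
        rwa [← e] at hh
      · have e : v2 = c * (a * v1 + b * v2) - a * (c * v1 + d * v2) := by
          linear_combination v2 * h
        have hh := dvd_sub (hL1.mul_left c) (hL2.mul_left a)
        rwa [← e] at hh
    exact Int.natCast_dvd_natCast.mp (Int.dvd_coe_gcd h1 h2)
  · have h1 : (↑(Int.gcd v1 v2) : ℤ) ∣ (a * v1 + b * v2) :=
      dvd_add ((Int.gcd_dvd_left _ _).mul_left a) ((Int.gcd_dvd_right _ _).mul_left b)
    have h2 : (↑(Int.gcd v1 v2) : ℤ) ∣ (c * v1 + d * v2) :=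
      dvd_add ((Int.gcd_dvd_left _ _).mul_left c) ((Int.gcd_dvd_right _ _).mul_left d)
    exact Int.natCast_dvd_natCast.mp (Int.dvd_coe_gcd h1 h2)

lemma int_isUnit {t : ℤ} {n : ℕ} (h : Int.gcd t (n : ℤ) = 1) : IsUnit ((t : ℤ) : ZMod n) := by
  have hb := Int.gcd_eq_gcd_ab t (n : ℤ)
  rw [h] at hb
  apply IsUnit.of_mul_eq_one ((Int.gcdA t (n : ℤ) : ℤ) : ZMod n)
  have hc := congrArg (fun z : ℤ => (z : ZMod n)) hb
  push_cast at hc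
  rw [ZMod.natCast_self] at hc
  linear_combination -hc

/-- canonical triangle vertex set -/
def cset (w : ℤ) (n : ℕ) : Set (ℤ × ℤ) := {((0:ℤ), (0:ℤ)), ((1:ℤ), (0:ℤ)), (w, (n:ℤ))}

theorem reduceA {n : ℕ} (hn : 0 < n) (A B C : ℤ × ℤ)
    (g1 : Int.gcd (B.1 - A.1) (B.2 - A.2) = 1)
    (g2 : Int.gcd (C.1 - A.1) (C.2 - A.2) = 1)
    (g3 : Int.gcd (C.1 - B.1) (C.2 - B.2) = 1)
    (hdn : (triDet A B C).natAbs = n) :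
    ∃ w : ℤ, 0 ≤ w ∧ w < n ∧ Int.gcd w n = 1 ∧ Int.gcd (w - 1) n = 1 ∧
      UnimodEquiv {A, B, C} (cset w n) := by
  obtain ⟨p, q, hpq⟩ : ∃ p q, (B.1 - A.1) * p + (B.2 - A.2) * q = 1 := by
    refine ⟨Int.gcdA (B.1 - A.1) (B.2 - A.2), Int.gcdB (B.1 - A.1) (B.2 - A.2), ?_⟩
    have hab := (Int.gcd_eq_gcd_ab (B.1 - A.1) (B.2 - A.2)).symm
    rw [g1] at hab
    exact_mod_cast hab
  obtain ⟨e, he, heD⟩ : ∃ e : ℤ, (e = 1 ∨ e = -1) ∧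
      e * ((B.1 - A.1) * (C.2 - A.2) - (B.2 - A.2) * (C.1 - A.1)) = (n : ℤ) := by
    rcases Int.natAbs_eq (triDet A B C) with h | h
    · refine ⟨1, Or.inl rfl, ?_⟩
      have h2 : triDet A B C = (n : ℤ) := by rw [h, hdn]
      unfold triDet at h2
      linear_combination h2
    · refine ⟨-1, Or.inr rfl, ?_⟩
      have h2 : triDet A B C = -(n : ℤ) := by rw [h, hdn]
      unfold triDet at h2
      linear_combination -h2
  set s : ℤ := p * (C.1 - A.1) + q * (C.2 - A.2) with hs
  obtain ⟨w, k, hw, hw0, hwn⟩ : ∃ w k : ℤ, s + k * (n : ℤ) = w ∧ 0 ≤ w ∧ w < (n : ℤ) := by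
    have hnz : (n : ℤ) ≠ 0 := by exact_mod_cast hn.ne'
    have hnpos : (0 : ℤ) < n := by exact_mod_cast hn
    refine ⟨s % n, -(s / n), ?_, Int.emod_nonneg s hnz, Int.emod_lt_of_pos s hnpos⟩
    rw [Int.emod_def]; ring
  -- the affine map coefficients
  set a : ℤ := p - k * e * (B.2 - A.2) with ha
  set b : ℤ := q + k * e * (B.1 - A.1) with hb
  set c : ℤ := -e * (B.2 - A.2) with hc
  set d : ℤ := e * (B.1 - A.1) with hd
  have hdet : a * d - b * c = 1 ∨ a * d - b * c = -1 := by
    rcases he with he1 | he1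
    · left
      rw [ha, hb, hc, hd, he1]
      linear_combination hpq
    · right
      rw [ha, hb, hc, hd, he1]
      linear_combination -hpq
  -- images of the three vertices
  have hfB1 : a * B.1 + b * B.2 + -(a * A.1 + b * A.2) = 1 := by
    rw [ha, hb]; linear_combination hpq
  have hfB2 : c * B.1 + d * B.2 + -(c * A.1 + d * A.2) = 0 := by
    rw [hc, hd]; ring
  have hfC1 : a * C.1 + b * C.2 + -(a * A.1 + b * A.2) = w := by
    rw [ha, hb]; linear_combination k * heD + hw
  have hfC2 : c * C.1 + d * C.2 + -(c * A.1 + d * A.2) = (n : ℤ) := by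
    rw [hc, hd]; linear_combination heD
  -- gcd conditions for w
  have hNv1 : a * (C.1 - A.1) + b * (C.2 - A.2) = w := by linear_combination hfC1
  have hNv2 : c * (C.1 - A.1) + d * (C.2 - A.2) = (n : ℤ) := by linear_combination hfC2
  have hgw : Int.gcd w (n : ℤ) = 1 := by
    rw [← hNv1, ← hNv2, unimod_gcd hdet]
    exact g2
  have hNw1 : a * (C.1 - B.1) + b * (C.2 - B.2) = w - 1 := by
    linear_combination hfC1 - hfB1
  have hNw2 : c * (C.1 - B.1) + d * (C.2 - B.2) = (n : ℤ) := by
    linear_combination hfC2 - hfB2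
  have hgw1 : Int.gcd (w - 1) (n : ℤ) = 1 := by
    rw [← hNw1, ← hNw2, unimod_gcd hdet]
    exact g3
  refine ⟨w, hw0, hwn, hgw, hgw1, ?_⟩
  refine ⟨a, b, c, d, -(a * A.1 + b * A.2), -(c * A.1 + d * A.2), hdet, ?_⟩
  rw [Set.image_insert_eq, Set.image_insert_eq, Set.image_singleton]
  unfold cset
  congr 1
  · exact Prod.ext (by ring) (by ring)
  congr 1
  · exact Prod.ext hfB1 hfB2
  · rw [Set.singleton_eq_singleton_iff]
    exact Prod.ext hfC1 hfC2

theorem stepB {n : ℕ} [NeZero n] {x y : ZMod n}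
    (hx : IsUnit x) (hx1 : IsUnit (x - 1))
    (h : UnimodEquiv (cset (x.val : ℤ) n) (cset (y.val : ℤ) n)) :
    y ∈ E x := by
  have hn : 0 < n := Nat.pos_of_ne_zero (NeZero.ne n)
  have hnz : (n : ℤ) ≠ 0 := by exact_mod_cast hn.ne'
  have hXc : ((x.val : ℕ) : ZMod n) = x := ZMod.natCast_rightInverse x
  have hYc : ((y.val : ℕ) : ZMod n) = y := ZMod.natCast_rightInverse y
  obtain ⟨a, b, c, d, u, v, hdet, him⟩ := h
  have hinj : ∀ p q : ℤ × ℤ,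
      ((a * p.1 + b * p.2 + u, c * p.1 + d * p.2 + v) : ℤ × ℤ)
        = (a * q.1 + b * q.2 + u, c * q.1 + d * q.2 + v) → p = q := by
    intro p q hpq
    rw [Prod.mk.injEq] at hpq
    obtain ⟨e1, e2⟩ := hpq
    rcases hdet with hD | hD
    · exact Prod.ext (by linear_combination d * e1 - b * e2 - (p.1 - q.1) * hD)
        (by linear_combination a * e2 - c * e1 - (p.2 - q.2) * hD)
    · exact Prod.ext (by linear_combination -(d * e1) + b * e2 + (p.1 - q.1) * hD)
        (by linear_combination -(a * e2) + c * e1 + (p.2 - q.2) * hD)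
  have hP01 : ¬ (((0:ℤ), (0:ℤ)) : ℤ × ℤ) = ((1:ℤ), (0:ℤ)) := by simp [Prod.ext_iff]
  have hP02 : ¬ (((0:ℤ), (0:ℤ)) : ℤ × ℤ) = ((x.val : ℤ), (n:ℤ)) := by
    intro hq
    exact hnz (congrArg Prod.snd hq).symm
  have hP12 : ¬ (((1:ℤ), (0:ℤ)) : ℤ × ℤ) = ((x.val : ℤ), (n:ℤ)) := by
    intro hq
    exact hnz (congrArg Prod.snd hq).symm
  have h0 : ((a * 0 + b * 0 + u, c * 0 + d * 0 + v) : ℤ × ℤ) ∈ cset (y.val : ℤ) n := by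
    rw [← him]; exact ⟨((0:ℤ), (0:ℤ)), by simp [cset], rfl⟩
  have h1 : ((a * 1 + b * 0 + u, c * 1 + d * 0 + v) : ℤ × ℤ) ∈ cset (y.val : ℤ) n := by
    rw [← him]; exact ⟨((1:ℤ), (0:ℤ)), by simp [cset], rfl⟩
  have h2 : ((a * (x.val : ℤ) + b * (n : ℤ) + u, c * (x.val : ℤ) + d * (n : ℤ) + v) : ℤ × ℤ)
      ∈ cset (y.val : ℤ) n := by
    rw [← him]; exact ⟨((x.val : ℤ), (n : ℤ)), by simp [cset], rfl⟩
  simp only [cset, Set.mem_insert_iff, Set.mem_singleton_iff] at h0 h1 h2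
  have ix := mul_inv_cancel' hx
  have jx := mul_inv_cancel' hx1
  rcases h0 with h0 | h0 | h0 <;> rcases h1 with h1 | h1 | h1 <;> rcases h2 with h2 | h2 | h2 <;>
    try { exfalso
          first
            | exact hP01 (hinj _ _ (h0.trans h1.symm))
            | exact hP02 (hinj _ _ (h0.trans h2.symm))
            | exact hP12 (hinj _ _ (h1.trans h2.symm)) }
  -- case A : identity permutation
  · rw [Prod.mk.injEq] at h0 h1 h2
    have c0 := congrArg (fun z : ℤ => (z : ZMod n)) h0.1
    have c1 := congrArg (fun z : ℤ => (z : ZMod n)) h1.1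
    have c2 := congrArg (fun z : ℤ => (z : ZMod n)) h2.1
    push_cast at c0 c1 c2
    rw [ZMod.natCast_self, hXc, hYc] at c2
    have hy : y = x := by linear_combination -c2 + x * c1 - x * c0 + c0
    rw [hy]
    simp [E]
  -- case B : x ↦ x⁻¹
  · rw [Prod.mk.injEq] at h0 h1 h2
    have c0 := congrArg (fun z : ℤ => (z : ZMod n)) h0.1
    have c1 := congrArg (fun z : ℤ => (z : ZMod n)) h1.1
    have c2 := congrArg (fun z : ℤ => (z : ZMod n)) h2.1
    push_cast at c0 c1 c2
    rw [hYc] at c1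
    rw [ZMod.natCast_self, hXc] at c2
    have e : x * y = 1 := by linear_combination c2 - x * c1 + (x - 1) * c0
    have hy : y = x⁻¹ := (inv_eq' hx e).symm
    rw [hy]
    simp [E]
  -- case C : x ↦ 1 - x
  · rw [Prod.mk.injEq] at h0 h1 h2
    have c0 := congrArg (fun z : ℤ => (z : ZMod n)) h0.1
    have c1 := congrArg (fun z : ℤ => (z : ZMod n)) h1.1
    have c2 := congrArg (fun z : ℤ => (z : ZMod n)) h2.1
    push_cast at c0 c1 c2
    rw [ZMod.natCast_self, hXc, hYc] at c2
    have hy : y = 1 - x := by linear_combination -c2 + x * c1 - (x - 1) * c0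
    rw [hy]
    simp [E]
  -- case D : x ↦ 1 - x⁻¹
  · rw [Prod.mk.injEq] at h0 h1 h2
    have c0 := congrArg (fun z : ℤ => (z : ZMod n)) h0.1
    have c1 := congrArg (fun z : ℤ => (z : ZMod n)) h1.1
    have c2 := congrArg (fun z : ℤ => (z : ZMod n)) h2.1
    push_cast at c0 c1 c2
    rw [hYc] at c1
    rw [ZMod.natCast_self, hXc] at c2
    have e : x * y = x - 1 := by linear_combination c2 - x * c1 - (1 - x) * c0
    have hy : y = 1 - x⁻¹ := by linear_combination x⁻¹ * e - (y - 1) * ix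
    rw [hy]
    simp [E]
  -- case E : x ↦ (1 - x)⁻¹
  · rw [Prod.mk.injEq] at h0 h1 h2
    have c0 := congrArg (fun z : ℤ => (z : ZMod n)) h0.1
    have c1 := congrArg (fun z : ℤ => (z : ZMod n)) h1.1
    have c2 := congrArg (fun z : ℤ => (z : ZMod n)) h2.1
    push_cast at c0 c1 c2
    rw [hYc] at c0
    rw [ZMod.natCast_self, hXc] at c2
    have e : (1 - x) * y = 1 := by linear_combination c2 - x * c1 - (1 - x) * c0
    have hy : y = (1 - x)⁻¹ := (inv_eq' (ox_unit hx hx1) e).symm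
    rw [hy]
    simp [E]
  -- case F : x ↦ x * (x - 1)⁻¹
  · rw [Prod.mk.injEq] at h0 h1 h2
    have c0 := congrArg (fun z : ℤ => (z : ZMod n)) h0.1
    have c1 := congrArg (fun z : ℤ => (z : ZMod n)) h1.1
    have c2 := congrArg (fun z : ℤ => (z : ZMod n)) h2.1
    push_cast at c0 c1 c2
    rw [hYc] at c0
    rw [ZMod.natCast_self, hXc] at c2
    have e : y * (x - 1) = x := by linear_combination -c2 + x * c1 - (x - 1) * c0
    have hy : y = x * (x - 1)⁻¹ := by linear_combination (x - 1)⁻¹ * e - y * jx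
    rw [hy]
    simp [E]

theorem stepB_rev {n : ℕ} [NeZero n] {x y : ZMod n}
    (hx : IsUnit x) (hx1 : IsUnit (x - 1)) (hy : y ∈ E x) :
    UnimodEquiv (cset (x.val : ℤ) n) (cset (y.val : ℤ) n) := by
  have hXc : ((x.val : ℕ) : ZMod n) = x := ZMod.natCast_rightInverse x
  have hYc : ((y.val : ℕ) : ZMod n) = y := ZMod.natCast_rightInverse y
  have ix := mul_inv_cancel' hx
  have jx := mul_inv_cancel' hx1
  simp only [E, Finset.mem_insert, Finset.mem_singleton] at hy
  rcases hy with hy | hy | hy | hy | hy | hy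
  -- 1 : y = x
  · have hz : (((y.val : ℤ) - (x.val : ℤ) : ℤ) : ZMod n) = 0 := by
      push_cast
      rw [hXc, hYc, hy]
      ring
    obtain ⟨t, ht⟩ := (ZMod.intCast_zmod_eq_zero_iff_dvd _ n).mp hz
    refine ⟨1, t, 0, 1, 0, 0, Or.inl (by ring), ?_⟩
    unfold cset
    rw [Set.image_insert_eq, Set.image_insert_eq, Set.image_singleton]
    have e0 : ((1 * (0:ℤ) + t * 0 + 0, 0 * (0:ℤ) + 1 * 0 + 0) : ℤ × ℤ) = ((0:ℤ), (0:ℤ)) :=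
      Prod.ext (by ring) (by ring)
    have e1 : ((1 * (1:ℤ) + t * 0 + 0, 0 * (1:ℤ) + 1 * 0 + 0) : ℤ × ℤ) = ((1:ℤ), (0:ℤ)) :=
      Prod.ext (by ring) (by ring)
    have e2 : ((1 * (x.val:ℤ) + t * (n:ℤ) + 0, 0 * (x.val:ℤ) + 1 * (n:ℤ) + 0) : ℤ × ℤ)
        = ((y.val:ℤ), (n:ℤ)) := Prod.ext (by linear_combination -ht) (by ring)
    rw [e0, e1, e2]
  -- 2 : y = x⁻¹
  · have hrel : x * y = 1 := by rw [hy]; exact ix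
    have hz : (((x.val : ℤ) * (y.val : ℤ) - 1 : ℤ) : ZMod n) = 0 := by
      push_cast
      rw [hXc, hYc]
      linear_combination hrel
    obtain ⟨t, ht⟩ := (ZMod.intCast_zmod_eq_zero_iff_dvd _ n).mp hz
    refine ⟨(y.val:ℤ), -t, (n:ℤ), -(x.val:ℤ), 0, 0, Or.inr (by linear_combination -ht), ?_⟩
    unfold cset
    rw [Set.image_insert_eq, Set.image_insert_eq, Set.image_singleton]
    have e0 : (((y.val:ℤ) * 0 + -t * 0 + 0, (n:ℤ) * 0 + -(x.val:ℤ) * 0 + 0) : ℤ × ℤ)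
        = ((0:ℤ), (0:ℤ)) := Prod.ext (by ring) (by ring)
    have e1 : (((y.val:ℤ) * 1 + -t * 0 + 0, (n:ℤ) * 1 + -(x.val:ℤ) * 0 + 0) : ℤ × ℤ)
        = ((y.val:ℤ), (n:ℤ)) := Prod.ext (by ring) (by ring)
    have e2 : (((y.val:ℤ) * (x.val:ℤ) + -t * (n:ℤ) + 0,
        (n:ℤ) * (x.val:ℤ) + -(x.val:ℤ) * (n:ℤ) + 0) : ℤ × ℤ)
        = ((1:ℤ), (0:ℤ)) := Prod.ext (by linear_combination ht) (by ring)
    rw [e0, e1, e2]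
    ext p
    simp only [Set.mem_insert_iff, Set.mem_singleton_iff]
    tauto
  -- 3 : y = 1 - x
  · have hz : (((y.val : ℤ) - 1 + (x.val : ℤ) : ℤ) : ZMod n) = 0 := by
      push_cast
      rw [hXc, hYc, hy]
      ring
    obtain ⟨t, ht⟩ := (ZMod.intCast_zmod_eq_zero_iff_dvd _ n).mp hz
    refine ⟨-1, t, 0, 1, 1, 0, Or.inr (by ring), ?_⟩
    unfold cset
    rw [Set.image_insert_eq, Set.image_insert_eq, Set.image_singleton]
    have e0 : ((-1 * (0:ℤ) + t * 0 + 1, 0 * (0:ℤ) + 1 * 0 + 0) : ℤ × ℤ) = ((1:ℤ), (0:ℤ)) :=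
      Prod.ext (by ring) (by ring)
    have e1 : ((-1 * (1:ℤ) + t * 0 + 1, 0 * (1:ℤ) + 1 * 0 + 0) : ℤ × ℤ) = ((0:ℤ), (0:ℤ)) :=
      Prod.ext (by ring) (by ring)
    have e2 : ((-1 * (x.val:ℤ) + t * (n:ℤ) + 1, 0 * (x.val:ℤ) + 1 * (n:ℤ) + 0) : ℤ × ℤ)
        = ((y.val:ℤ), (n:ℤ)) := Prod.ext (by linear_combination -ht) (by ring)
    rw [e0, e1, e2]
    ext p
    simp only [Set.mem_insert_iff, Set.mem_singleton_iff]
    tauto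
  -- 4 : y = (1 - x)⁻¹   (entry order in E: fourth is (1-x)⁻¹)
  · have hrel : (1 - x) * y = 1 := by
      rw [hy]
      exact mul_inv_cancel' (ox_unit hx hx1)
    have hz : (((y.val : ℤ) - (x.val : ℤ) * (y.val : ℤ) - 1 : ℤ) : ZMod n) = 0 := by
      push_cast
      rw [hXc, hYc]
      linear_combination hrel
    obtain ⟨t, ht⟩ := (ZMod.intCast_zmod_eq_zero_iff_dvd _ n).mp hz
    refine ⟨-(y.val:ℤ), -t, -(n:ℤ), (x.val:ℤ) - 1, (y.val:ℤ), (n:ℤ), Or.inl (by linear_combination ht), ?_⟩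
    unfold cset
    rw [Set.image_insert_eq, Set.image_insert_eq, Set.image_singleton]
    have e0 : ((-(y.val:ℤ) * 0 + -t * 0 + (y.val:ℤ), -(n:ℤ) * 0 + ((x.val:ℤ) - 1) * 0 + (n:ℤ)) : ℤ × ℤ)
        = ((y.val:ℤ), (n:ℤ)) := Prod.ext (by ring) (by ring)
    have e1 : ((-(y.val:ℤ) * 1 + -t * 0 + (y.val:ℤ), -(n:ℤ) * 1 + ((x.val:ℤ) - 1) * 0 + (n:ℤ)) : ℤ × ℤ)
        = ((0:ℤ), (0:ℤ)) := Prod.ext (by ring) (by ring)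
    have e2 : ((-(y.val:ℤ) * (x.val:ℤ) + -t * (n:ℤ) + (y.val:ℤ),
        -(n:ℤ) * (x.val:ℤ) + ((x.val:ℤ) - 1) * (n:ℤ) + (n:ℤ)) : ℤ × ℤ)
        = ((1:ℤ), (0:ℤ)) := Prod.ext (by linear_combination ht) (by ring)
    rw [e0, e1, e2]
    ext p
    simp only [Set.mem_insert_iff, Set.mem_singleton_iff]
    tauto
  -- 5 : y = 1 - x⁻¹
  · have hrel : x * y = x - 1 := by
      rw [hy]
      linear_combination -ix
    have hz : (((x.val : ℤ) * (y.val : ℤ) - (x.val : ℤ) + 1 : ℤ) : ZMod n) = 0 := by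
      push_cast
      rw [hXc, hYc]
      linear_combination hrel
    obtain ⟨t, ht⟩ := (ZMod.intCast_zmod_eq_zero_iff_dvd _ n).mp hz
    refine ⟨(y.val:ℤ) - 1, -t, (n:ℤ), -(x.val:ℤ), 1, 0, Or.inl (by linear_combination -ht), ?_⟩
    unfold cset
    rw [Set.image_insert_eq, Set.image_insert_eq, Set.image_singleton]
    have e0 : ((((y.val:ℤ) - 1) * 0 + -t * 0 + 1, (n:ℤ) * 0 + -(x.val:ℤ) * 0 + 0) : ℤ × ℤ)
        = ((1:ℤ), (0:ℤ)) := Prod.ext (by ring) (by ring)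
    have e1 : ((((y.val:ℤ) - 1) * 1 + -t * 0 + 1, (n:ℤ) * 1 + -(x.val:ℤ) * 0 + 0) : ℤ × ℤ)
        = ((y.val:ℤ), (n:ℤ)) := Prod.ext (by ring) (by ring)
    have e2 : ((((y.val:ℤ) - 1) * (x.val:ℤ) + -t * (n:ℤ) + 1,
        (n:ℤ) * (x.val:ℤ) + -(x.val:ℤ) * (n:ℤ) + 0) : ℤ × ℤ)
        = ((0:ℤ), (0:ℤ)) := Prod.ext (by linear_combination ht) (by ring)
    rw [e0, e1, e2]
    ext p
    simp only [Set.mem_insert_iff, Set.mem_singleton_iff]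
    tauto
  -- 6 : y = x * (x - 1)⁻¹
  · have hrel : y * (x - 1) = x := by
      rw [hy]
      linear_combination x * jx
    have hz : (((x.val : ℤ) * (y.val : ℤ) - (y.val : ℤ) - (x.val : ℤ) : ℤ) : ZMod n) = 0 := by
      push_cast
      rw [hXc, hYc]
      linear_combination hrel
    obtain ⟨t, ht⟩ := (ZMod.intCast_zmod_eq_zero_iff_dvd _ n).mp hz
    refine ⟨1 - (y.val:ℤ), t, -(n:ℤ), (x.val:ℤ) - 1, (y.val:ℤ), (n:ℤ), Or.inr (by linear_combination -ht), ?_⟩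
    unfold cset
    rw [Set.image_insert_eq, Set.image_insert_eq, Set.image_singleton]
    have e0 : (((1 - (y.val:ℤ)) * 0 + t * 0 + (y.val:ℤ), -(n:ℤ) * 0 + ((x.val:ℤ) - 1) * 0 + (n:ℤ)) : ℤ × ℤ)
        = ((y.val:ℤ), (n:ℤ)) := Prod.ext (by ring) (by ring)
    have e1 : (((1 - (y.val:ℤ)) * 1 + t * 0 + (y.val:ℤ), -(n:ℤ) * 1 + ((x.val:ℤ) - 1) * 0 + (n:ℤ)) : ℤ × ℤ)
        = ((1:ℤ), (0:ℤ)) := Prod.ext (by ring) (by ring)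
    have e2 : (((1 - (y.val:ℤ)) * (x.val:ℤ) + t * (n:ℤ) + (y.val:ℤ),
        -(n:ℤ) * (x.val:ℤ) + ((x.val:ℤ) - 1) * (n:ℤ) + (n:ℤ)) : ℤ × ℤ)
        = ((0:ℤ), (0:ℤ)) := Prod.ext (by linear_combination -ht) (by ring)
    rw [e0, e1, e2]
    ext p
    simp only [Set.mem_insert_iff, Set.mem_singleton_iff]
    tauto


section glue
variable {n : ℕ} [NeZero n]

/-- int gcd with n is 1 when the reduction is a unit -/
lemma int_gcd_one {z : ZMod n} (hz : IsUnit z) (t : ℤ) (hcast : ((t : ℤ) : ZMod n) = z) :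
    Int.gcd t (n : ℤ) = 1 := by
  have hc := ZMod.mul_inv_of_unit z hz
  have hzv : (((z⁻¹).val : ℕ) : ZMod n) = z⁻¹ := ZMod.natCast_rightInverse _
  have hdvd : ((t * ((z⁻¹).val : ℤ) - 1 : ℤ) : ZMod n) = 0 := by
    push_cast
    rw [hcast, hzv]
    linear_combination hc
  obtain ⟨s, hs⟩ := (ZMod.intCast_zmod_eq_zero_iff_dvd _ n).mp hdvd
  have h1 : (↑(Int.gcd t (n : ℤ)) : ℤ) ∣ t * ((z⁻¹).val : ℤ) :=
    (Int.gcd_dvd_left _ _).mul_right _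
  have h2 : (↑(Int.gcd t (n : ℤ)) : ℤ) ∣ (n : ℤ) * s := (Int.gcd_dvd_right _ _).mul_right s
  have h3 : (↑(Int.gcd t (n : ℤ)) : ℤ) ∣ 1 := by
    have hd := dvd_sub h1 h2
    have he : t * ((z⁻¹).val : ℤ) - (n : ℤ) * s = 1 := by linear_combination hs
    rwa [he] at hd
  have h4 : Int.gcd t (n : ℤ) ∣ 1 := by exact_mod_cast h3
  exact Nat.dvd_one.mp h4

/-- the subtype of points -/
def Xsub (n : ℕ) : Type := {x : ZMod n // IsUnit x ∧ IsUnit (x - 1)}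

/-- vertex set of a triangle -/
def tset {n : ℕ} (T : CleanTri n) : Set (ℤ × ℤ) := {T.1.1, T.1.2.1, T.1.2.2}

/-- the canonical clean triangle attached to x -/
def psi (x : Xsub n) : CleanTri n := by
  refine ⟨((0, 0), (1, 0), (((x.1.val : ℕ) : ℤ), (n : ℤ))), ⟨?_, ?_, ?_, ?_⟩, ?_⟩
  · show triDet _ _ _ ≠ 0
    have hd : triDet ((0:ℤ), (0:ℤ)) ((1:ℤ), (0:ℤ)) (((x.1.val : ℕ) : ℤ), (n : ℤ)) = (n : ℤ) := by
      unfold triDet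
      ring
    rw [hd]
    exact_mod_cast (NeZero.ne n)
  · show Int.gcd ((1:ℤ) - 0) ((0:ℤ) - 0) = 1
    norm_num
  · show Int.gcd (((x.1.val : ℕ) : ℤ) - 0) ((n : ℤ) - 0) = 1
    rw [sub_zero, sub_zero]
    exact int_gcd_one x.2.1 _ (by push_cast; exact ZMod.natCast_rightInverse x.1)
  · show Int.gcd (((x.1.val : ℕ) : ℤ) - 1) ((n : ℤ) - 0) = 1
    rw [sub_zero]
    refine int_gcd_one x.2.2 _ ?_
    push_cast
    rw [ZMod.natCast_rightInverse x.1]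
  · show (triDet _ _ _).natAbs = n
    have hd : triDet ((0:ℤ), (0:ℤ)) ((1:ℤ), (0:ℤ)) (((x.1.val : ℕ) : ℤ), (n : ℤ)) = (n : ℤ) := by
      unfold triDet
      ring
    rw [hd, Int.natAbs_natCast]

lemma tset_psi (x : Xsub n) : tset (psi x) = cset ((x.1.val : ℕ) : ℤ) n := rfl

/-- the relation on clean triangles -/
def relT (n : ℕ) : CleanTri n → CleanTri n → Prop :=
  fun T₁ T₂ => UnimodEquiv {T₁.1.1, T₁.1.2.1, T₁.1.2.2} {T₂.1.1, T₂.1.2.1, T₂.1.2.2}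

lemma relT_eqv : Equivalence (relT n) :=
  ⟨fun _ => unimod_refl _, fun h => unimod_symm h, fun h h' => unimod_trans h h'⟩

/-- the relation on the parameter space -/
def relX (n : ℕ) : Xsub n → Xsub n → Prop := fun x y => (y.1 : ZMod n) ∈ E x.1

lemma exists_canon (T : CleanTri n) :
    ∃ x : Xsub n, UnimodEquiv (tset T) (cset ((x.1.val : ℕ) : ℤ) n) := by
  obtain ⟨⟨A, B, C⟩, ⟨hd0, g1, g2, g3⟩, hdn⟩ := T
  obtain ⟨w, hw0, hwn, hgw, hgw1, he⟩ := reduceA (Nat.pos_of_ne_zero (NeZero.ne n)) A B C g1 g2 g3 hdn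
  have hu1 : IsUnit ((w : ℤ) : ZMod n) := int_isUnit hgw
  have hu2 : IsUnit (((w : ℤ) : ZMod n) - 1) := by
    have hcast : (((w - 1 : ℤ)) : ZMod n) = ((w : ℤ) : ZMod n) - 1 := by push_cast; ring
    rw [← hcast]
    exact int_isUnit hgw1
  refine ⟨⟨((w : ℤ) : ZMod n), hu1, hu2⟩, ?_⟩
  have hval : (((((w : ℤ) : ZMod n)).val : ℕ) : ℤ) = w := by
    rw [ZMod.val_intCast]
    exact Int.emod_eq_of_lt hw0 hwn
  rw [hval]
  exact he

/-- Ψ : Quot relX → Quot relT -/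
noncomputable def Psi : Quot (relX n) → Quot (relT n) :=
  Quot.map psi (fun x y h => by
    show UnimodEquiv _ _
    have := stepB_rev x.2.1 x.2.2 h
    exact this)

lemma Psi_surjective : Function.Surjective (Psi (n := n)) := by
  intro q
  induction q using Quot.ind with
  | _ T =>
    obtain ⟨x, hx⟩ := exists_canon T
    refine ⟨Quot.mk _ x, ?_⟩
    exact Quot.sound (unimod_symm hx)

lemma Psi_injective : Function.Injective (Psi (n := n)) := by
  intro q1 q2 h
  induction q1 using Quot.ind with
  | _ x =>
    induction q2 using Quot.ind with
    | _ y =>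
      have hR : relT n (psi x) (psi y) :=
        ((relT_eqv).eqvGen_iff).mp (Quot.eq.mp h)
      have : UnimodEquiv (cset ((x.1.val : ℕ) : ℤ) n) (cset ((y.1.val : ℕ) : ℤ) n) := hR
      exact Quot.sound (stepB x.2.1 x.2.2 this)

/-- γ : Quot relX ≃ orbit finsets -/
noncomputable def gam : Quot (relX n) → {F : Finset (ZMod n) // F ∈ (Xf n).image E} :=
  Quot.lift (fun x => ⟨E x.1, Finset.mem_image_of_mem E (mem_Xf.mpr x.2)⟩)
    (fun x y h => Subtype.ext (orbit_eq x.2.1 x.2.2 _ h).symm)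

lemma gam_surjective : Function.Surjective (gam (n := n)) := by
  rintro ⟨F, hF⟩
  obtain ⟨x, hx, rfl⟩ := Finset.mem_image.mp hF
  exact ⟨Quot.mk _ ⟨x, mem_Xf.mp hx⟩, rfl⟩

lemma gam_injective : Function.Injective (gam (n := n)) := by
  intro q1 q2 h
  induction q1 using Quot.ind with
  | _ x =>
    induction q2 using Quot.ind with
    | _ y =>
      have hE : E x.1 = E y.1 := congrArg Subtype.val h
      apply Quot.sound
      show (y.1 : ZMod n) ∈ E x.1
      rw [hE]
      exact self_mem_E

theorem TriCount_eq : TriCount n = ((Xf n).image E).card := by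
  have h1 : TriCount n = Nat.card (Quot (relT n)) := rfl
  rw [h1,
    Nat.card_congr (Equiv.ofBijective (Psi (n := n)) ⟨Psi_injective, Psi_surjective⟩).symm,
    Nat.card_congr (Equiv.ofBijective (gam (n := n)) ⟨gam_injective, gam_surjective⟩)]
  rw [Nat.card_eq_fintype_card]
  exact Fintype.card_coe _

end glue
end TCT

/-- If `n` is odd, divisible by 3 but not 9, and all other prime divisors of `n` are
`≡ 1 (mod 6)`, then `𝒯(n) = (imph(n) + 2^{ω(n)} + 3)/6`. -/
theorem triCount_case_two (n : ℕ) (hn : 0 < n) (hodd : Odd n)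
    (h3 : 3 ∣ n) (h9 : ¬ (9 ∣ n))
    (hp : ∀ p ∈ n.primeFactors, p ≠ 3 → p % 6 = 1) :
    6 * TriCount n = imph n + 2 ^ n.primeFactors.card + 3 := by
  haveI : NeZero n := ⟨hn.ne'⟩
  have hn3 : 3 ≤ n := Nat.le_of_dvd hn h3
  have hn1 : 1 < n := by omega
  rw [TCT.TriCount_eq, TCT.imph_eq hn1]
  rcases Nat.lt_or_ge 3 n with hlt | hge
  · -- main case n > 3
    have h2u : IsUnit (2 : ZMod n) := by
      have hcop : Nat.Coprime 2 n := by
        rw [Nat.Prime.coprime_iff_not_dvd Nat.prime_two]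
        intro hdd
        rw [Nat.odd_iff] at hodd
        omega
      have := (ZMod.isUnit_iff_coprime 2 n).mpr hcop
      simpa using this
    have h3ne : (3 : ZMod n) ≠ 0 := by
      intro hz
      have : n ∣ 3 := by
        have : ((3 : ℕ) : ZMod n) = 0 := by exact_mod_cast hz
        exact (ZMod.natCast_eq_zero_iff 3 n).mp this
      have := Nat.le_of_dvd (by norm_num) this
      omega
    rw [TCT.count_main h2u h3ne]
    have hroots : (TCT.Roots n).card = 2 ^ (n.primeFactors.card - 1) := by
      rw [← TCT.RC_main hn h3 h9 hp]
      rw [TCT.RC, Nat.card_eq_fintype_card, Fintype.card_subtype]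
      rfl
    have hω : 1 ≤ n.primeFactors.card := by
      have h3mem : 3 ∈ n.primeFactors := Nat.mem_primeFactors.mpr ⟨Nat.prime_three, h3, hn.ne'⟩
      exact Finset.card_pos.mpr ⟨3, h3mem⟩
    rw [hroots]
    have hpow : 2 * 2 ^ (n.primeFactors.card - 1) = 2 ^ n.primeFactors.card := by
      have he : n.primeFactors.card - 1 + 1 = n.primeFactors.card := by omega
      rw [← pow_succ' 2 (n.primeFactors.card - 1), he]
    rw [hpow]
  · -- n = 3
    have hn3' : n = 3 := by omega
    subst hn3'
    have hXf3 : TCT.Xf 3 = {2} := by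
      ext z
      rw [TCT.mem_Xf, Finset.mem_singleton]
      constructor
      · intro ⟨hu, hu1⟩
        have hall : ∀ w : ZMod 3, w = 0 ∨ w = 1 ∨ w = 2 := by decide
        rcases hall z with rfl | rfl | rfl
        · exfalso
          rw [isUnit_zero_iff] at hu
          exact absurd hu (by decide)
        · exfalso
          have he : ((1 : ZMod 3) - 1) = 0 := by decide
          rw [he, isUnit_zero_iff] at hu1
          exact absurd hu1 (by decide)
        · rfl
      · rintro rfl
        constructor
        · exact IsUnit.of_mul_eq_one 2 (by decide)
        · have he : ((2 : ZMod 3) - 1) = 1 := by decide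
          rw [he]
          exact isUnit_one
    rw [hXf3, Finset.image_singleton, Finset.card_singleton, Finset.card_singleton,
      Nat.Prime.primeFactors Nat.prime_three, Finset.card_singleton]
    norm_num
end

section
/- As N → ∞, the normalized partial sums (∑_{n=1}^{N} imph(n))/N² converge to (1/4)·∏_{p odd prime} (1 − 2/p²), where the product ranges over all primes p ≥ 3. -/
open Filter Topology

namespace ImphAux

open ArithmeticFunction Finset
open scoped ArithmeticFunction.Moebius

theorem isUnit_prod_iff {M N : Type*} [Monoid M] [Monoid N] (x : M × N) :
    IsUnit x ↔ IsUnit x.1 ∧ IsUnit x.2 := by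
  constructor
  · intro h
    exact ⟨h.map (MonoidHom.fst M N), h.map (MonoidHom.snd M N)⟩
  · rintro ⟨⟨u, hu⟩, ⟨v, hv⟩⟩
    refine ⟨⟨(u.val, v.val), (u.inv, v.inv), ?_, ?_⟩, ?_⟩
    · ext <;> simp [u.val_inv, v.val_inv]
    · ext <;> simp [u.inv_val, v.inv_val]
    · ext <;> simp [hu, hv]

theorem imph_eq_card (n : ℕ) (hn : n ≠ 0) :
    imph n = Nat.card {x : ZMod n // IsUnit x ∧ IsUnit (x - 1)} := by
  haveI : NeZero n := ⟨hn⟩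
  rcases eq_or_ne n 1 with rfl | hn1
  · have h1 : ∀ x : ZMod 1, IsUnit x ∧ IsUnit (x - 1) := by
      intro x
      exact ⟨isUnit_of_subsingleton x, isUnit_of_subsingleton _⟩
    have h2 : imph 1 = 1 := by decide
    rw [h2, Nat.card_congr (Equiv.subtypeUnivEquiv h1), Nat.card_eq_fintype_card, ZMod.card]
  have hn2 : 2 ≤ n := by omega
  haveI : Fact (1 < n) := ⟨hn2⟩
  rw [Nat.card_eq_fintype_card, Fintype.card_subtype, imph]
  refine Finset.card_bij (fun x _ => (x : ZMod n)) ?_ ?_ ?_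
  · rintro x hx
    simp only [Finset.mem_filter, Finset.mem_Icc] at hx
    obtain ⟨⟨hx1, hxn⟩, hgcd1, hgcd⟩ := hx
    simp only [Finset.mem_filter, Finset.mem_univ, true_and]
    refine ⟨(ZMod.isUnit_iff_coprime x n).mpr hgcd, ?_⟩
    rw [← Nat.cast_one, ← Nat.cast_sub hx1]
    exact (ZMod.isUnit_iff_coprime _ n).mpr hgcd1
  · rintro x hx y hy hxy
    simp only [Finset.mem_filter, Finset.mem_Icc] at hx hy
    have hxn : x < n := by
      rcases lt_or_eq_of_le hx.1.2 with h | h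
      · exact h
      · exfalso; have := hx.2.2; rw [h] at this; simp [Nat.gcd_self] at this; omega
    have hyn : y < n := by
      rcases lt_or_eq_of_le hy.1.2 with h | h
      · exact h
      · exfalso; have := hy.2.2; rw [h] at this; simp [Nat.gcd_self] at this; omega
    calc x = (x : ZMod n).val := (ZMod.val_cast_of_lt hxn).symm
    _ = (y : ZMod n).val := congrArg ZMod.val hxy
    _ = y := ZMod.val_cast_of_lt hyn
  · rintro z hz
    simp only [Finset.mem_filter, Finset.mem_univ, true_and] at hz
    obtain ⟨hu, hu1⟩ := hz
    have hzne : z ≠ 0 := by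
      rintro rfl
      rw [isUnit_zero_iff] at hu
      exact zero_ne_one hu
    have hval : 1 ≤ z.val := by
      by_contra h
      push_neg at h
      interval_cases hv : z.val
      · exact hzne ((ZMod.val_eq_zero z).mp hv)
    have hcast : ((z.val : ℕ) : ZMod n) = z := ZMod.natCast_rightInverse z
    refine ⟨z.val, ?_, hcast⟩
    simp only [Finset.mem_filter, Finset.mem_Icc]
    refine ⟨⟨hval, (ZMod.val_lt z).le⟩, ?_, ?_⟩
    · apply (ZMod.isUnit_iff_coprime _ n).mp
      rw [Nat.cast_sub hval, hcast, Nat.cast_one]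
      exact hu1
    · apply (ZMod.isUnit_iff_coprime _ n).mp
      rw [hcast]
      exact hu

theorem isUnit_ringEquiv {R S : Type*} [Ring R] [Ring S] (e : R ≃+* S) (x : R) :
    IsUnit (e x) ↔ IsUnit x := by
  constructor
  · intro h
    have := h.map e.symm.toRingHom
    simpa using this
  · intro h
    exact h.map e.toRingHom

theorem card_mul {m n : ℕ} (h : Nat.Coprime m n) :
    Nat.card {x : ZMod (m * n) // IsUnit x ∧ IsUnit (x - 1)}
      = Nat.card {x : ZMod m // IsUnit x ∧ IsUnit (x - 1)}
        * Nat.card {x : ZMod n // IsUnit x ∧ IsUnit (x - 1)} := by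
  rw [← Nat.card_prod]
  apply Nat.card_congr
  have e1 : {x : ZMod (m * n) // IsUnit x ∧ IsUnit (x - 1)} ≃
      {y : ZMod m × ZMod n //
        (fun a : ZMod m => IsUnit a ∧ IsUnit (a - 1)) y.1 ∧
        (fun b : ZMod n => IsUnit b ∧ IsUnit (b - 1)) y.2} := by
    refine Equiv.subtypeEquiv (ZMod.chineseRemainder h).toEquiv (fun x => ?_)
    rw [show (ZMod.chineseRemainder h).toEquiv x = (ZMod.chineseRemainder h) x from rfl]
    rw [← isUnit_ringEquiv (ZMod.chineseRemainder h) x,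
      ← isUnit_ringEquiv (ZMod.chineseRemainder h) (x - 1), map_sub, map_one,
      isUnit_prod_iff, isUnit_prod_iff]
    simp only [Prod.fst_sub, Prod.snd_sub, Prod.fst_one, Prod.snd_one]
    tauto
  exact e1.trans (Equiv.subtypeProdEquivProd
    (p := fun a : ZMod m => IsUnit a ∧ IsUnit (a - 1))
    (q := fun b : ZMod n => IsUnit b ∧ IsUnit (b - 1)))

theorem imph_mul {m n : ℕ} (h : Nat.Coprime m n) : imph (m * n) = imph m * imph n := by
  rcases eq_or_ne m 0 with rfl | hm
  · have hn : n = 1 := (Nat.coprime_zero_left n).mp h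
    subst hn
    simp [imph]
  rcases eq_or_ne n 0 with rfl | hn
  · have hm1 : m = 1 := (Nat.coprime_zero_right m).mp h
    subst hm1
    simp [imph]
  rw [imph_eq_card _ (Nat.mul_ne_zero hm hn), imph_eq_card _ hm, imph_eq_card _ hn]
  exact card_mul h


theorem count_dvd (n p : ℕ) : ((Finset.Icc 1 n).filter (p ∣ ·)).card = n / p := by
  rw [show Finset.Icc 1 n = Finset.Ioc 0 n by rw [← Finset.Icc_add_one_left_eq_Ioc, zero_add]]
  exact Nat.Ioc_filter_dvd_card_eq_div n p

theorem count_dvd_sub_one (n p : ℕ) (hn : 1 ≤ n) :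
    ((Finset.Icc 1 n).filter (fun x => p ∣ (x - 1))).card = (n - 1) / p + 1 := by
  have hs : (Finset.Icc 1 n).filter (fun x => p ∣ (x - 1))
      = insert 1 ((((Finset.Icc 1 (n - 1)).filter (p ∣ ·))).image (· + 1)) := by
    ext x
    simp only [Finset.mem_filter, Finset.mem_Icc, Finset.mem_insert, Finset.mem_image]
    constructor
    · rintro ⟨⟨hx1, hxn⟩, hdvd⟩
      rcases eq_or_ne x 1 with rfl | hx
      · exact Or.inl rfl
      · exact Or.inr ⟨x - 1, ⟨⟨by omega, by omega⟩, hdvd⟩, by omega⟩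
    · rintro (rfl | ⟨y, ⟨⟨hy1, hyn⟩, hdvd⟩, rfl⟩)
      · exact ⟨⟨le_refl 1, hn⟩, by simp⟩
      · exact ⟨⟨by omega, by omega⟩, by simpa using hdvd⟩
  rw [hs, Finset.card_insert_of_notMem, Finset.card_image_of_injective _ (add_left_injective 1),
    count_dvd]
  · simp only [Finset.mem_image, Finset.mem_filter, Finset.mem_Icc]
    rintro ⟨y, ⟨⟨hy1, _⟩, _⟩, hy⟩
    omega

theorem imph_prime_pow {p : ℕ} (hp : p.Prime) {k : ℕ} (hk : k ≠ 0) :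
    (imph (p ^ k) : ℤ) = (p : ℤ) ^ k - 2 * (p : ℤ) ^ (k - 1) := by
  have hp1 : 1 < p := hp.one_lt
  have hpk : 1 ≤ p ^ k := Nat.one_le_pow _ _ (by omega)
  have hcond : ∀ x ∈ Finset.Icc 1 (p ^ k),
      ((Nat.gcd (x - 1) (p ^ k) = 1 ∧ Nat.gcd x (p ^ k) = 1) ↔ ¬(p ∣ x ∨ p ∣ (x - 1))) := by
    intro x hx
    have h1 : ∀ y : ℕ, (Nat.gcd y (p ^ k) = 1 ↔ ¬ p ∣ y) := by
      intro y
      rw [show (Nat.gcd y (p ^ k) = 1) = Nat.Coprime y (p ^ k) from rfl,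
        Nat.coprime_pow_right_iff (by omega), Nat.coprime_comm]
      exact hp.coprime_iff_not_dvd
    rw [h1, h1]
    tauto
  rw [imph, Finset.filter_congr hcond]
  have hdisj : Disjoint ((Finset.Icc 1 (p ^ k)).filter (p ∣ ·))
      ((Finset.Icc 1 (p ^ k)).filter (fun x => p ∣ (x - 1))) := by
    rw [Finset.disjoint_left]
    simp only [Finset.mem_filter, Finset.mem_Icc]
    rintro x ⟨⟨hx1, _⟩, hdx⟩ ⟨_, hdx1⟩
    have : p ∣ x - (x - 1) := Nat.dvd_sub hdx hdx1
    rw [show x - (x - 1) = 1 by omega] at this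
    exact absurd (Nat.eq_one_of_dvd_one this) (by omega)
  have key : (Finset.Icc 1 (p ^ k)).filter (fun x => ¬(p ∣ x ∨ p ∣ (x - 1)))
      = Finset.Icc 1 (p ^ k) \ (((Finset.Icc 1 (p ^ k)).filter (p ∣ ·)) ∪
          ((Finset.Icc 1 (p ^ k)).filter (fun x => p ∣ (x - 1)))) := by
    rw [← Finset.filter_or, Finset.filter_not]
  rw [key, Finset.card_sdiff_of_subset (by
    apply Finset.union_subset <;> exact Finset.filter_subset _ _),
    Finset.card_union_of_disjoint hdisj, count_dvd, count_dvd_sub_one _ _ hpk, Nat.card_Icc]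
  have e1 : p ^ k / p = p ^ (k - 1) := by
    rw [show p ^ k / p = p ^ k / p ^ 1 by rw [pow_one], Nat.pow_div (by omega) (by omega)]
  have e2 : (p ^ k - 1) / p = p ^ (k - 1) - 1 := by
    have hkk : p ^ k = p * p ^ (k - 1) := by
      rw [← pow_succ']
      congr 1
      omega
    have hq : 1 ≤ p ^ (k - 1) := Nat.one_le_pow _ _ (by omega)
    have hle : p ≤ p * p ^ (k - 1) := Nat.le_mul_of_pos_right p (by omega)
    rw [hkk, show p * p ^ (k - 1) - 1 = p * (p ^ (k - 1) - 1) + (p - 1) by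
      rw [Nat.mul_sub]; omega]
    rw [Nat.mul_add_div (by omega), Nat.div_eq_of_lt (by omega)]
    omega
  rw [e1, e2]
  have h2 : 2 * p ^ (k - 1) ≤ p ^ k := by
    calc 2 * p ^ (k - 1) ≤ p * p ^ (k - 1) := by
          apply Nat.mul_le_mul_right; omega
    _ = p ^ k := by rw [← pow_succ']; congr 1; omega
  have hq : 1 ≤ p ^ (k - 1) := Nat.one_le_pow _ _ (by omega)
  have e3 : p ^ k + 1 - 1 - (p ^ (k - 1) + (p ^ (k - 1) - 1 + 1)) = p ^ k - 2 * p ^ (k - 1) := by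
    omega
  rw [e3, Nat.cast_sub h2]
  push_cast
  ring


/-- The multiplicative function `d ↦ μ(d) 2^{ω(d)}`. -/
def B : ArithmeticFunction ℤ :=
  ⟨fun d => μ d * 2 ^ d.primeFactors.card, by simp⟩

theorem B_apply (d : ℕ) : B d = μ d * 2 ^ d.primeFactors.card := rfl

theorem B_mult : B.IsMultiplicative := by
  constructor
  · rw [B_apply]
    simp
  · intro m n h
    rcases eq_or_ne m 0 with rfl | hm
    · obtain rfl := (Nat.coprime_zero_left n).mp h
      simp [B_apply]
    rcases eq_or_ne n 0 with rfl | hn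
    · obtain rfl := (Nat.coprime_zero_right m).mp h
      simp [B_apply]
    rw [B_apply, B_apply, B_apply, isMultiplicative_moebius.2 h,
      Nat.Coprime.primeFactors_mul h,
      Finset.card_union_of_disjoint (Nat.Coprime.disjoint_primeFactors h)]
    ring

theorem B_prime {p : ℕ} (hp : p.Prime) : B p = -2 := by
  rw [B_apply, moebius_apply_prime hp, hp.primeFactors]
  simp

theorem B_prime_pow {p : ℕ} (hp : p.Prime) {j : ℕ} (hj : 2 ≤ j) : B (p ^ j) = 0 := by
  rw [B_apply, moebius_apply_prime_pow hp (by omega), if_neg (by omega)]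
  simp

/-- `imph` as an integer-valued arithmetic function. -/
def F : ArithmeticFunction ℤ :=
  ⟨fun n => (imph n : ℤ), by simp [imph]⟩

theorem F_mult : F.IsMultiplicative := by
  constructor
  · show ((imph 1 : ℤ)) = 1
    norm_num [show imph 1 = 1 from by decide]
  · intro m n h
    show ((imph (m * n) : ℤ)) = (imph m : ℤ) * (imph n : ℤ)
    rw [imph_mul h]
    push_cast
    ring

theorem F_eq : F = B * (ArithmeticFunction.id : ArithmeticFunction ℕ) := by
  rw [IsMultiplicative.eq_iff_eq_on_prime_powers F F_mult _
    (B_mult.mul isMultiplicative_id.natCast)]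
  intro p i hp
  rcases eq_or_ne i 0 with rfl | hi
  · rw [pow_zero]
    rw [F_mult.map_one, (B_mult.mul isMultiplicative_id.natCast).map_one]
  show ((imph (p ^ i) : ℤ)) = _
  rw [imph_prime_pow hp hi, mul_apply]
  rw [show ∑ x ∈ (p ^ i).divisorsAntidiagonal, B x.1 * (↑ArithmeticFunction.id : ArithmeticFunction ℤ) x.2
      = ∑ d ∈ (p ^ i).divisors, B d * ((p ^ i / d : ℕ) : ℤ) from by
    rw [← Nat.sum_divisorsAntidiagonal (fun d e => B d * ((e : ℕ) : ℤ))]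
    apply Finset.sum_congr rfl
    intro x _
    rw [natCoe_apply, ArithmeticFunction.id_apply]]
  rw [Nat.divisors_prime_pow hp, Finset.sum_map]
  simp only [Function.Embedding.coeFn_mk]
  rw [← Finset.sum_subset (s₁ := ({0, 1} : Finset ℕ)) (h := by
    intro j hj
    simp only [Finset.mem_range, Finset.mem_insert, Finset.mem_singleton] at hj ⊢
    omega)]
  · rw [Finset.sum_insert (by norm_num), Finset.sum_singleton]
    have d0 : p ^ i / p ^ 0 = p ^ i := by rw [pow_zero, Nat.div_one]
    have d1 : p ^ i / p ^ 1 = p ^ (i - 1) := Nat.pow_div (by omega) hp.pos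
    rw [d0, d1, pow_zero, B_mult.map_one, pow_one, B_prime hp]
    push_cast
    ring
  · intro j hjr hj
    simp only [Finset.mem_insert, Finset.mem_singleton] at hj
    push_neg at hj
    rw [B_prime_pow hp (by omega)]
    ring

theorem imph_eq_sum (n : ℕ) :
    (imph n : ℤ) = ∑ d ∈ n.divisors, B d * ((n / d : ℕ) : ℤ) := by
  have h := congrArg (fun f : ArithmeticFunction ℤ => f n) F_eq
  rw [show ((imph n : ℤ)) = F n from rfl, h, mul_apply,
    ← Nat.sum_divisorsAntidiagonal (fun d e => B d * ((e : ℕ) : ℤ))]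
  apply Finset.sum_congr rfl
  intro x _
  rw [natCoe_apply, ArithmeticFunction.id_apply]


/-- Gauss sum. -/
noncomputable def T (M : ℕ) : ℝ := ∑ e ∈ Finset.Icc 1 M, (e : ℝ)

theorem T_eq (M : ℕ) : T M = M * (M + 1) / 2 := by
  induction M with
  | zero => simp [T]
  | succ m ih =>
    rw [T, Finset.sum_Icc_succ_top (by omega), ← T, ih]
    push_cast
    ring

theorem T_nonneg (M : ℕ) : 0 ≤ T M := by
  rw [T_eq]
  positivity

theorem tau_le_sqrt {n : ℕ} (hn : n ≠ 0) : n.divisors.card ≤ 2 * Nat.sqrt n := by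
  classical
  have hsub : n.divisors.filter (· ≤ Nat.sqrt n) ⊆ Finset.Icc 1 (Nat.sqrt n) := by
    intro d hd
    simp only [Finset.mem_filter, Nat.mem_divisors] at hd
    simp only [Finset.mem_Icc]
    exact ⟨Nat.pos_of_dvd_of_pos hd.1.1 (Nat.pos_of_ne_zero hn), hd.2⟩
  have hscard : (n.divisors.filter (· ≤ Nat.sqrt n)).card ≤ Nat.sqrt n := by
    calc (n.divisors.filter (· ≤ Nat.sqrt n)).card ≤ (Finset.Icc 1 (Nat.sqrt n)).card :=
          Finset.card_le_card hsub
    _ = Nat.sqrt n := by rw [Nat.card_Icc]; omega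
  have htcard : (n.divisors.filter (fun d => ¬ d ≤ Nat.sqrt n)).card
      ≤ (n.divisors.filter (· ≤ Nat.sqrt n)).card := by
    apply Finset.card_le_card_of_injOn (fun d => n / d)
    · intro d hd
      simp only [Finset.coe_filter, Set.mem_setOf_eq, Finset.mem_coe, Finset.mem_filter, Nat.mem_divisors] at hd
      obtain ⟨⟨hdvd, _⟩, hgt⟩ := hd
      push_neg at hgt
      have hd0 : 0 < d := Nat.pos_of_dvd_of_pos hdvd (Nat.pos_of_ne_zero hn)
      simp only [Finset.coe_filter, Set.mem_setOf_eq, Finset.mem_coe, Finset.mem_filter, Nat.mem_divisors]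
      refine ⟨⟨?_, hn⟩, ?_⟩
      · obtain ⟨e, rfl⟩ := hdvd
        rw [Nat.mul_div_cancel_left _ hd0]
        exact Dvd.intro_left d rfl
      · by_contra hgt2
        push_neg at hgt2
        have heq : d * (n / d) = n := Nat.mul_div_cancel' hdvd
        have hm : (Nat.sqrt n + 1) * (Nat.sqrt n + 1) ≤ d * (n / d) :=
          Nat.mul_le_mul hgt hgt2
        rw [heq] at hm
        have hlt := Nat.lt_succ_sqrt n
        nlinarith
    · intro d1 h1 d2 h2 heq
      simp only [Finset.coe_filter, Set.mem_setOf_eq, Nat.mem_divisors] at h1 h2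
      have heq' : n / d1 = n / d2 := heq
      have e1 : n / (n / d1) = d1 := Nat.div_div_self h1.1.1 hn
      have e2 : n / (n / d2) = d2 := Nat.div_div_self h2.1.1 hn
      rw [← e1, ← e2, heq']
  have hsplit := Finset.card_filter_add_card_filter_not
    (s := n.divisors) (p := (· ≤ Nat.sqrt n))
  omega

theorem natAbs_B_le {d : ℕ} (hd : d ≠ 0) : (B d).natAbs ≤ d.divisors.card := by
  by_cases hsq : Squarefree d
  · rw [B_apply, moebius_apply_of_squarefree hsq]
    rw [Int.natAbs_mul, Int.natAbs_pow, Int.natAbs_pow]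
    simp only [Int.natAbs_neg, Int.natAbs_one, one_pow, one_mul, Int.natAbs_natCast]
    rw [Nat.card_divisors hd]
    calc (2 : ℕ) ^ d.primeFactors.card
        = ∏ _p ∈ d.primeFactors, 2 := by rw [Finset.prod_const]
    _ ≤ ∏ p ∈ d.primeFactors, (d.factorization p + 1) := by
        apply Finset.prod_le_prod'
        intro p hp
        rw [Nat.mem_primeFactors] at hp
        have := hp.1.factorization_pos_of_dvd hd hp.2.1
        omega
  · rw [B_apply, moebius_eq_zero_of_not_squarefree hsq]
    simp

theorem B_real_le {d : ℕ} (hd : d ≠ 0) : |((B d : ℤ) : ℝ)| ≤ 2 * Real.sqrt d := by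
  have habs : |((B d : ℤ) : ℝ)| = ((B d).natAbs : ℝ) := by
    rw [← Int.cast_abs, Int.abs_eq_natAbs, Int.cast_natCast]
  rw [habs]
  have h1 : ((B d).natAbs : ℝ) ≤ (d.divisors.card : ℝ) := by
    exact_mod_cast natAbs_B_le hd
  have h2 : ((d.divisors.card : ℕ) : ℝ) ≤ 2 * (Nat.sqrt d : ℝ) := by
    exact_mod_cast tau_le_sqrt hd
  have h3 : (Nat.sqrt d : ℝ) ≤ Real.sqrt d := by
    rw [Real.le_sqrt (by positivity) (by positivity)]
    exact_mod_cast Nat.sqrt_le' d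
  calc ((B d).natAbs : ℝ) ≤ (d.divisors.card : ℝ) := h1
  _ ≤ 2 * (Nat.sqrt d : ℝ) := h2
  _ ≤ 2 * Real.sqrt d := by linarith

theorem sum_swap (N : ℕ) (g : ℕ → ℕ → ℝ) :
    ∑ n ∈ Finset.Icc 1 N, ∑ de ∈ n.divisorsAntidiagonal, g de.1 de.2
      = ∑ d ∈ Finset.Icc 1 N, ∑ e ∈ Finset.Icc 1 (N / d), g d e := by
  rw [Finset.sum_sigma' (Finset.Icc 1 N) (fun n => n.divisorsAntidiagonal)
      (fun _n de => g de.1 de.2),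
    Finset.sum_sigma' (Finset.Icc 1 N) (fun d => Finset.Icc 1 (N / d)) (fun d e => g d e)]
  refine Finset.sum_nbij' (fun x => ⟨x.2.1, x.2.2⟩) (fun x => ⟨x.1 * x.2, (x.1, x.2)⟩)
    ?_ ?_ ?_ ?_ ?_
  · rintro ⟨n, d, e⟩ hx
    simp only [Finset.mem_sigma, Finset.mem_Icc, Nat.mem_divisorsAntidiagonal] at hx ⊢
    obtain ⟨⟨hn1, hnN⟩, hde, _⟩ := hx
    have hd0 : 0 < d := by
      rcases Nat.eq_zero_or_pos d with rfl | h
      · simp at hde; omega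
      · exact h
    have he0 : 0 < e := by
      rcases Nat.eq_zero_or_pos e with rfl | h
      · simp at hde; omega
      · exact h
    refine ⟨⟨hd0, ?_⟩, he0, ?_⟩
    · calc d ≤ d * e := Nat.le_mul_of_pos_right d he0
      _ = n := hde
      _ ≤ N := hnN
    · rw [Nat.le_div_iff_mul_le hd0]
      calc e * d = d * e := mul_comm e d
      _ = n := hde
      _ ≤ N := hnN
  · rintro ⟨d, e⟩ hx
    simp only [Finset.mem_sigma, Finset.mem_Icc] at hx
    obtain ⟨⟨hd1, hdN⟩, he1, heN⟩ := hx
    have hde : d * e ≤ N := by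
      have := (Nat.le_div_iff_mul_le (by omega)).mp heN
      calc d * e = e * d := mul_comm d e
      _ ≤ N := this
    have hpos : 0 < d * e := Nat.mul_pos (by omega) (by omega)
    refine Finset.mem_sigma.mpr ⟨Finset.mem_Icc.mpr ⟨?_, hde⟩,
      Nat.mem_divisorsAntidiagonal.mpr ⟨rfl, ?_⟩⟩
    · exact hpos
    · exact hpos.ne'
  · rintro ⟨n, d, e⟩ hx
    simp only [Finset.mem_sigma, Finset.mem_Icc, Nat.mem_divisorsAntidiagonal] at hx
    obtain ⟨_, hde, _⟩ := hx
    subst hde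
    rfl
  · rintro ⟨d, e⟩ _
    rfl
  · rintro ⟨n, d, e⟩ _
    rfl


noncomputable def c (d : ℕ) : ℝ := ((B d : ℤ) : ℝ) / (d : ℝ) ^ 2

noncomputable def fN (N d : ℕ) : ℝ := ((B d : ℤ) : ℝ) * T (N / d) / (N : ℝ) ^ 2

theorem S_div (N : ℕ) :
    (∑ n ∈ Finset.Icc 1 N, (imph n : ℝ)) / (N : ℝ) ^ 2 = ∑' d, fN N d := by
  have e0 : ∀ n : ℕ, (imph n : ℝ)
      = ∑ de ∈ n.divisorsAntidiagonal, ((B de.1 : ℤ) : ℝ) * ((de.2 : ℕ) : ℝ) := by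
    intro n
    calc (imph n : ℝ)
        = ∑ d ∈ n.divisors, ((B d : ℤ) : ℝ) * ((n / d : ℕ) : ℝ) := by
          have h2 := congrArg (fun z : ℤ => (z : ℝ)) (imph_eq_sum n)
          push_cast at h2
          exact h2
    _ = ∑ de ∈ n.divisorsAntidiagonal, ((B de.1 : ℤ) : ℝ) * ((de.2 : ℕ) : ℝ) :=
        (Nat.sum_divisorsAntidiagonal (fun d e => ((B d : ℤ) : ℝ) * ((e : ℕ) : ℝ))).symm
  have h1 : ∑ n ∈ Finset.Icc 1 N, (imph n : ℝ)
      = ∑ d ∈ Finset.Icc 1 N, ((B d : ℤ) : ℝ) * T (N / d) := by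
    rw [Finset.sum_congr rfl (fun n _ => e0 n),
      sum_swap N (fun d e => ((B d : ℤ) : ℝ) * ((e : ℕ) : ℝ))]
    apply Finset.sum_congr rfl
    intro d _
    rw [T, Finset.mul_sum]
  rw [h1, Finset.sum_div]
  symm
  apply tsum_eq_sum
  intro d hd
  simp only [Finset.mem_Icc, not_and, not_le] at hd
  rcases Nat.eq_zero_or_pos d with rfl | hd0
  · have hB : (B 0 : ℤ) = 0 := B.map_zero
    rw [fN, hB]
    simp
  · have hNd : N < d := hd hd0
    have : N / d = 0 := Nat.div_eq_of_lt hNd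
    rw [fN, this, show T 0 = 0 from by simp [T]]
    simp

noncomputable def bnd (d : ℕ) : ℝ := 2 * Real.sqrt d / (d : ℝ) ^ 2

theorem bnd_nonneg (d : ℕ) : 0 ≤ bnd d := by
  rw [bnd]
  positivity

theorem bnd_summable : Summable bnd := by
  have h : ∀ d : ℕ, 2 * (1 / (d : ℝ) ^ ((3 : ℝ) / 2)) = bnd d := by
    intro d
    rcases Nat.eq_zero_or_pos d with rfl | hd
    · simp [bnd, Real.zero_rpow (by norm_num : (3 : ℝ) / 2 ≠ 0)]
    · have hd0 : (0 : ℝ) < d := by positivity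
      rw [bnd, Real.sqrt_eq_rpow,
        show ((d : ℝ) ^ 2) = (d : ℝ) ^ ((2 : ℕ) : ℝ) from (Real.rpow_natCast _ 2).symm,
        mul_div_assoc, ← Real.rpow_sub hd0,
        show (1 : ℝ) / 2 - ((2 : ℕ) : ℝ) = -((3 : ℝ) / 2) by norm_num,
        Real.rpow_neg hd0.le, one_div]
  exact ((Real.summable_one_div_nat_rpow.mpr (by norm_num)).mul_left 2).congr h

theorem abs_fN_le (N d : ℕ) : ‖fN N d‖ ≤ bnd d := by
  rcases Nat.eq_zero_or_pos d with rfl | hd0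
  · have hB : (B 0 : ℤ) = 0 := B.map_zero
    rw [fN, hB]
    simpa using bnd_nonneg 0
  rcases Nat.eq_zero_or_pos N with rfl | hN0
  · rw [fN, show (0 : ℕ) / d = 0 from Nat.zero_div d, show T 0 = 0 from by simp [T]]
    simpa using bnd_nonneg d
  have hdR : (0 : ℝ) < d := by positivity
  have hNR : (0 : ℝ) < N := by positivity
  have hnorm : ‖fN N d‖ = |((B d : ℤ) : ℝ)| * T (N / d) / (N : ℝ) ^ 2 := by
    rw [fN, Real.norm_eq_abs, abs_div, abs_mul, abs_of_nonneg (T_nonneg _),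
      abs_of_nonneg (by positivity : (0 : ℝ) ≤ (N : ℝ) ^ 2)]
  have hT : T (N / d) ≤ ((N : ℝ) / d) ^ 2 := by
    have hq : ((N / d : ℕ) : ℝ) ≤ (N : ℝ) / d := Nat.cast_div_le
    have hq0 : (0 : ℝ) ≤ ((N / d : ℕ) : ℝ) := by positivity
    rw [T_eq]
    rcases Nat.eq_zero_or_pos (N / d) with hz | hpos
    · rw [hz]
      norm_num
      positivity
    · have h1 : (1 : ℝ) ≤ ((N / d : ℕ) : ℝ) := by exact_mod_cast hpos
      nlinarith
  have hB : |((B d : ℤ) : ℝ)| ≤ 2 * Real.sqrt d := B_real_le (by omega)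
  rw [hnorm]
  calc |((B d : ℤ) : ℝ)| * T (N / d) / (N : ℝ) ^ 2
      ≤ (2 * Real.sqrt d) * (((N : ℝ) / d) ^ 2) / (N : ℝ) ^ 2 := by
        gcongr
        exact T_nonneg _
  _ = bnd d := by
      rw [bnd]
      field_simp

theorem fN_tendsto (d : ℕ) :
    Tendsto (fun N : ℕ => fN N d) atTop (𝓝 ((1 / 2) * c d)) := by
  rcases Nat.eq_zero_or_pos d with rfl | hd0
  · have hB : (B 0 : ℤ) = 0 := B.map_zero
    have h1 : (fun N : ℕ => fN N 0) = fun _ => (0 : ℝ) := by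
      funext N
      rw [fN, hB]
      simp
    have h2 : (1 / 2) * c 0 = 0 := by
      rw [c, hB]
      simp
    rw [h1, h2]
    exact tendsto_const_nhds
  have hdR : (0 : ℝ) < d := by positivity
  have hq : Tendsto (fun N : ℕ => ((N / d : ℕ) : ℝ) / (N : ℝ)) atTop (𝓝 (1 / d)) := by
    apply tendsto_of_tendsto_of_tendsto_of_le_of_le'
      (g := fun N : ℕ => 1 / (d : ℝ) - 1 / (N : ℝ)) (h := fun _ : ℕ => 1 / (d : ℝ))
    · have h2 := (tendsto_const_nhds :
        Tendsto (fun _ : ℕ => (1 / (d : ℝ))) atTop (𝓝 (1 / (d : ℝ)))).sub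
        tendsto_one_div_atTop_nhds_zero_nat
      simpa using h2
    · exact tendsto_const_nhds
    · filter_upwards [eventually_ge_atTop 1] with N hN
      have hNR : (0 : ℝ) < N := by exact_mod_cast hN
      have key : (N : ℝ) < (((N / d : ℕ) : ℝ) + 1) * d := by
        have h := Nat.lt_div_mul_add (a := N) (b := d) hd0
        have h3 : N < (N / d + 1) * d := by rw [add_mul, one_mul]; omega
        exact_mod_cast h3
      have h2 : (N : ℝ) / d - 1 ≤ ((N / d : ℕ) : ℝ) := by
        have := (div_lt_iff₀ hdR).mpr key
        linarith
      have h4 : ((N : ℝ) / d - 1) / N ≤ ((N / d : ℕ) : ℝ) / N :=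
        (div_le_div_iff_of_pos_right hNR).mpr h2
      calc (1 : ℝ) / d - 1 / N = ((N : ℝ) / d - 1) / N := by
            field_simp
      _ ≤ ((N / d : ℕ) : ℝ) / N := h4
    · filter_upwards [eventually_ge_atTop 1] with N hN
      have hNR : (0 : ℝ) < N := by exact_mod_cast hN
      have hq1 : ((N / d : ℕ) : ℝ) ≤ (N : ℝ) / d := Nat.cast_div_le
      calc ((N / d : ℕ) : ℝ) / N ≤ ((N : ℝ) / d) / N := (div_le_div_iff_of_pos_right hNR).mpr hq1
      _ = 1 / d := by field_simp
  have hmain := (hq.const_mul (((B d : ℤ) : ℝ) / 2)).mul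
    (hq.add tendsto_one_div_atTop_nhds_zero_nat)
  have heq : ∀ᶠ N : ℕ in atTop,
      (((B d : ℤ) : ℝ) / 2 * (((N / d : ℕ) : ℝ) / N)) *
        (((N / d : ℕ) : ℝ) / N + 1 / N) = fN N d := by
    filter_upwards [eventually_ge_atTop 1] with N hN
    have hNR : (0 : ℝ) < N := by exact_mod_cast hN
    rw [fN, T_eq]
    field_simp
  have hval : ((B d : ℤ) : ℝ) / 2 * (1 / d) * (1 / d + 0) = (1 / 2) * c d := by
    rw [c]
    ring
  rw [← hval]
  exact hmain.congr' heq

theorem c_summable : Summable (fun d => ‖c d‖) := by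
  apply Summable.of_nonneg_of_le (fun d => norm_nonneg _) _ bnd_summable
  intro d
  rcases Nat.eq_zero_or_pos d with rfl | hd0
  · have hB : (B 0 : ℤ) = 0 := B.map_zero
    rw [c, hB]
    simpa using bnd_nonneg 0
  have hdR : (0 : ℝ) < d := by positivity
  rw [c, Real.norm_eq_abs, abs_div, abs_of_nonneg (by positivity : (0 : ℝ) ≤ (d : ℝ) ^ 2), bnd]
  exact (div_le_div_iff_of_pos_right (by positivity)).mpr (B_real_le (by omega))

theorem euler : HasProd (fun p : Nat.Primes => (1 - 2 / ((p : ℕ) : ℝ) ^ 2)) (∑' n, c n) := by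
  have hasprod := EulerProduct.eulerProduct_hasProd (f := c) (by
      rw [c, B_mult.map_one]; norm_num)
    (fun {m n} h => by
      rw [c, c, c, B_mult.2 h]
      push_cast
      ring)
    c_summable (by rw [c, B.map_zero]; simp)
  have factor : (fun p : Nat.Primes => ∑' e, c ((p : ℕ) ^ e))
      = fun p : Nat.Primes => (1 - 2 / ((p : ℕ) : ℝ) ^ 2) := by
    funext p
    have htail : ∀ e ∉ ({0, 1} : Finset ℕ), c ((p : ℕ) ^ e) = 0 := by
      intro e he
      simp only [Finset.mem_insert, Finset.mem_singleton] at he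
      push_neg at he
      rw [c, B_prime_pow p.prop (by omega)]
      simp
    rw [tsum_eq_sum htail, Finset.sum_insert (by norm_num), Finset.sum_singleton,
      pow_zero, pow_one, c, c, B_mult.map_one, B_prime p.prop]
    have hp2 : (2 : ℝ) ≤ ((p : ℕ) : ℝ) := by exact_mod_cast p.prop.two_le
    push_cast
    field_simp
    ring
  rw [← factor]
  exact hasprod

end ImphAux

/-- `(∑_{n ≤ N} imph(n)) / N² → (1/4) ∏_{p ≥ 3 prime} (1 - 2/p²)` as `N → ∞`. -/
theorem imph_average_order :
    Tendsto (fun N : ℕ => (∑ n ∈ Finset.Icc 1 N, (imph n : ℝ)) / (N : ℝ) ^ 2) atTop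
      (𝓝 ((1 / 4) * ∏' p : {p : ℕ // p.Prime ∧ 3 ≤ p}, (1 - 2 / ((p : ℕ) : ℝ) ^ 2))) := by
  classical
  set L : ℝ := ∑' n, ImphAux.c n with hL
  -- the modified product with the factor at 2 removed
  set two : Nat.Primes := ⟨2, Nat.prime_two⟩ with htwo
  have gprod : HasProd (fun q : Nat.Primes => if q = two then (2 : ℝ) else 1) 2 :=
    hasProd_ite_eq two 2
  have h3 : HasProd (fun q : Nat.Primes =>
      if q = two then (1 : ℝ) else 1 - 2 / ((q : ℕ) : ℝ) ^ 2) (L * 2) := by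
    have h := ImphAux.euler.mul gprod
    have hfun : (fun b : Nat.Primes =>
        (1 - 2 / ((b : ℕ) : ℝ) ^ 2) * if b = two then (2 : ℝ) else 1)
        = fun q : Nat.Primes => if q = two then (1 : ℝ) else 1 - 2 / ((q : ℕ) : ℝ) ^ 2 := by
      funext q
      by_cases hq : q = two
      · subst hq
        simp only [if_pos rfl]
        norm_num [htwo]
      · simp only [if_neg hq]
        ring
    rwa [hfun] at h
  have hinj : Function.Injective
      (fun p : {p : ℕ // p.Prime ∧ 3 ≤ p} => (⟨p.1, p.2.1⟩ : Nat.Primes)) := by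
    intro a b hab
    simp only [Subtype.mk.injEq] at hab
    exact Subtype.ext hab
  have hoff : ∀ q : Nat.Primes,
      q ∉ Set.range (fun p : {p : ℕ // p.Prime ∧ 3 ≤ p} => (⟨p.1, p.2.1⟩ : Nat.Primes)) →
      (if q = two then (1 : ℝ) else 1 - 2 / ((q : ℕ) : ℝ) ^ 2) = 1 := by
    intro q hq
    by_cases h2 : q = two
    · rw [if_pos h2]
    · exfalso
      apply hq
      have hq2 : (q : ℕ) ≠ 2 := by
        intro h
        apply h2
        rw [htwo]
        exact Subtype.ext h
      have hq3 : 3 ≤ (q : ℕ) := by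
        have := q.prop.two_le
        omega
      exact ⟨⟨(q : ℕ), q.prop, hq3⟩, rfl⟩
  have h4 := (hinj.hasProd_iff hoff).mpr h3
  have h5 : ((fun q : Nat.Primes => if q = two then (1 : ℝ) else 1 - 2 / ((q : ℕ) : ℝ) ^ 2)
        ∘ (fun p : {p : ℕ // p.Prime ∧ 3 ≤ p} => (⟨p.1, p.2.1⟩ : Nat.Primes)))
      = fun p : {p : ℕ // p.Prime ∧ 3 ≤ p} => 1 - 2 / ((p : ℕ) : ℝ) ^ 2 := by
    funext p
    have hne : (⟨p.1, p.2.1⟩ : Nat.Primes) ≠ two := by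
      rw [htwo]
      intro h
      have h2 : (p : ℕ) = 2 := by
        have h3 := congrArg (fun q : Nat.Primes => (q : ℕ)) h
        simpa using h3
      have := p.2.2
      omega
    exact if_neg hne
  have hprod : (∏' p : {p : ℕ // p.Prime ∧ 3 ≤ p}, (1 - 2 / ((p : ℕ) : ℝ) ^ 2)) = L * 2 := by
    rw [← h4.tprod_eq]
    exact tprod_congr (fun p => (congrFun h5 p).symm)
  rw [hprod]
  have key := tendsto_tsum_of_dominated_convergence ImphAux.bnd_summable ImphAux.fN_tendsto
    (Filter.Eventually.of_forall ImphAux.abs_fN_le)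
  have hfun2 : (fun N : ℕ => (∑ n ∈ Finset.Icc 1 N, (imph n : ℝ)) / (N : ℝ) ^ 2)
      = fun N : ℕ => ∑' d, ImphAux.fN N d := funext ImphAux.S_div
  rw [hfun2]
  have hval : (∑' d, (1 / 2) * ImphAux.c d) = (1 / 4) * (L * 2) := by
    rw [tsum_mul_left, ← hL]
    ring
  rw [← hval]
  exact key
end
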